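/- arXiv:cs/0409013 — 10 statements merged into one kernel-verified Lean document; each statement's English description precedes it below -/
import Mathlib

section
/- If a graph G has a locally connected spanning tree T and S is a separating set of G (i.e., G − S is disconnected), then the subgraph of G induced by S contains at least one edge of T. -/
/-- `T` is a locally connected spanning tree of `G`: a spanning tree of `G`
such that for every vertex `v`, the set of neighbors of `v` in `T` induces a
connected subgraph of `G`. -/
def IsLCST {V : Type*} (G T : SimpleGraph V) : Prop :=
  T ≤ G ∧ T.Connected ∧ T.IsAcyclic ∧
    ∀ v : V, (G.induce (T.neighborSet v)).Connected

private lemma lcst_aux {V : Type*} (G T : SimpleGraph V) (hle : T ≤ G) (S : Set V)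
    (hsub : ∀ s ∈ S, T.neighborSet s ⊆ Sᶜ)
    (hloc : ∀ v : V, (G.induce (T.neighborSet v)).Preconnected) :
    ∀ {x y : V}, T.Walk x y → ∀ (hx : x ∈ Sᶜ) (hy : y ∈ Sᶜ),
      (G.induce (Sᶜ : Set V)).Reachable ⟨x, hx⟩ ⟨y, hy⟩
  | _, _, .nil, hx, hy => SimpleGraph.Reachable.refl _
  | _, _, .cons h .nil, hx, hy =>
      SimpleGraph.Adj.reachable (hle h)
  | x, y, .cons (v := v) h (.cons (v := z) h' w), hx, hy => by
      by_cases hv : v ∈ S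
      · have hNsub : T.neighborSet v ⊆ Sᶜ := hsub v hv
        have hxN : x ∈ T.neighborSet v := h.symm
        have hzN : z ∈ T.neighborSet v := h'
        have hreach : (G.induce (T.neighborSet v)).Reachable ⟨x, hxN⟩ ⟨z, hzN⟩ :=
          hloc v _ _
        let F : G.induce (T.neighborSet v) →g G.induce (Sᶜ : Set V) :=
          ⟨fun a => ⟨a.1, hNsub a.2⟩, fun {a b} hab => hab⟩
        have h1 : (G.induce (Sᶜ : Set V)).Reachable ⟨x, hx⟩ ⟨z, hNsub hzN⟩ :=
          hreach.map F
        exact h1.trans (lcst_aux G T hle S hsub hloc w (hNsub hzN) hy)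
      · have h1 : (G.induce (Sᶜ : Set V)).Adj ⟨x, hx⟩ ⟨v, hv⟩ := hle h
        exact h1.reachable.trans
          (lcst_aux G T hle S hsub hloc (.cons h' w) hv hy)

/-- If `G` has a locally connected spanning tree `T` and `S` is a separating set
of `G` (removing `S` disconnects `G`), then the subgraph of `G` induced by `S`
contains at least one edge of `T`. -/
theorem lcst_separating_set_contains_tree_edge {V : Type*} [Fintype V]
    (G T : SimpleGraph V) (hT : IsLCST G T) (S : Set V)
    (hS : ¬ (G.induce (Sᶜ : Set V)).Preconnected) :
    ∃ x ∈ S, ∃ y ∈ S, T.Adj x y := by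
  by_contra hE
  push_neg at hE
  have hsub : ∀ s ∈ S, T.neighborSet s ⊆ Sᶜ := by
    intro s hs t ht
    intro htS
    exact hE s hs t htS ht
  apply hS
  intro a b
  obtain ⟨w⟩ := hT.2.1.preconnected a.1 b.1
  have := lcst_aux G T hT.1 S hsub (fun v => (hT.2.2.2 v).preconnected) w a.2 b.2
  simpa using this
end

section
/- If a finite simple graph G has a locally connected spanning tree and at least 3 vertices, then G is 2-connected. -/
/-- Inclusion homomorphism between induced subgraphs. -/
def induceIncl {V : Type*} (G : SimpleGraph V) {s t : Set V} (hst : s ⊆ t) :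
    G.induce s →g G.induce t where
  toFun := Set.inclusion hst
  map_rel' := fun h => h

lemma key_reach {V : Type*} (G T : SimpleGraph V) (hle : T ≤ G)
    (hloc : ∀ v : V, (G.induce (T.neighborSet v)).Connected) (v : V) :
    ∀ n (u w : V) (p : T.Walk u w), p.length = n → ∀ (hu : u ≠ v) (hw : w ≠ v),
      (G.induce {x | x ≠ v}).Reachable ⟨u, hu⟩ ⟨w, hw⟩ := by
  intro n
  induction n using Nat.strong_induction_on with
  | _ n IH =>
    intro u w p hlen hu hw
    cases p with
    | nil => exact SimpleGraph.Reachable.refl _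
    | @cons _ x _ h p' =>
      by_cases hx : x ≠ v
      · have hadj : (G.induce {x | x ≠ v}).Adj ⟨u, hu⟩ ⟨x, hx⟩ := by
          simpa using hle h
        exact hadj.reachable.trans
          (IH p'.length (by simp at hlen; omega) x w p' rfl hx hw)
      · push_neg at hx
        subst hx
        cases p' with
        | nil => exact absurd rfl hw
        | @cons _ y _ h2 p'' =>
          have hy : y ≠ x := h2.ne'
          have hu' : u ∈ T.neighborSet x := h.symm
          have hy' : y ∈ T.neighborSet x := h2
          have hr : (G.induce (T.neighborSet x)).Reachable ⟨u, hu'⟩ ⟨y, hy'⟩ :=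
            (hloc x).preconnected _ _
          have hsub : T.neighborSet x ⊆ {z | z ≠ x} := fun z hz => (T.ne_of_adj hz).symm
          have hr2 : (G.induce {z | z ≠ x}).Reachable ⟨u, hu⟩ ⟨y, hy⟩ :=
            hr.map (induceIncl G hsub)
          exact hr2.trans (IH p''.length (by simp at hlen; omega) y w p'' rfl hy hw)

/-- If a finite simple graph `G` with at least 3 vertices has a locally connected
spanning tree, then `G` is 2-connected: it is connected and has no cut-vertex. -/
theorem lcst_implies_two_connected {V : Type*} [Fintype V] (G : SimpleGraph V)
    (h3 : 3 ≤ Fintype.card V) (h : ∃ T, IsLCST G T) :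
    G.Connected ∧ ∀ v : V, (G.induce {u | u ≠ v}).Connected := by
  obtain ⟨T, hle, hconn, _, hloc⟩ := h
  refine ⟨hconn.mono hle, fun v => ?_⟩
  have hne : ∃ u : V, u ≠ v := Fintype.exists_ne_of_one_lt_card (by omega) v
  obtain ⟨u0, hu0⟩ := hne
  rw [SimpleGraph.connected_iff]
  constructor
  · rintro ⟨a, ha⟩ ⟨b, hb⟩
    obtain ⟨p⟩ := hconn.preconnected a b
    exact key_reach G T hle hloc v p.length a b p rfl ha hb
  · exact ⟨⟨u0, hu0⟩⟩
end

section
/- Suppose {x, y} is a separating set of a graph G and H is a connected component of G − {x, y}. If H contains no common neighbor of x and y, then G has no locally connected spanning tree. -/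
/-! Let `P` be the vertex set of `H`; every `G`-edge leaving `P` ends in `x` or `y`. If the
`T`-neighbourhood `N` of `x` met both `P` and its complement, a path inside `G[N]` would leave
`P` along an edge `p q` with `p ∈ P`; then `q = y`, and `p` would be a common neighbour of `x`
and `y`. So the `T`-neighbourhood of `x` (and likewise of `y`) lies inside `P` as soon as it
meets `P`. Hence `P`, together with those of `x`, `y` that have a `T`-neighbour in `P`, is
closed under `T`-adjacency; by connectivity of `T` it is everything, contradicting that
`{x, y}` separates. -/

namespace SimpleGraph

variable {V : Type*} {G T : SimpleGraph V}

lemma Preconnected.eq_univ_of_adj_mem {S : Set V} (hG : G.Preconnected) (hS : S.Nonempty)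
    (hclosed : ∀ v ∈ S, ∀ u, G.Adj v u → u ∈ S) : S = Set.univ := by
  obtain ⟨s, hs⟩ := hS
  refine Set.eq_univ_of_forall fun w => by_contra fun hw => ?_
  obtain ⟨d, -, hd, hd'⟩ := (hG s w).some.exists_boundary_dart S hs hw
  exact hd' (hclosed _ hd _ d.adj)

lemma exists_ne_connectedComponentMk_of_not_preconnected (hG : ¬ G.Preconnected)
    (C : G.ConnectedComponent) : ∃ v, G.connectedComponentMk v ≠ C := by
  obtain ⟨a, b, hab⟩ : ∃ a b, ¬ G.Reachable a b := by simpa [Preconnected] using hG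
  by_cases ha : G.connectedComponentMk a = C
  · exact ⟨b, fun hb => hab (ConnectedComponent.exact (ha.trans hb.symm))⟩
  · exact ⟨a, ha⟩

lemma mem_image_supp_of_adj {K : Set V} {C : (G.induce K).ConnectedComponent} {v u : V}
    (hv : v ∈ Subtype.val '' C.supp) (hu : u ∈ K) (hadj : G.Adj v u) :
    u ∈ Subtype.val '' C.supp := by
  obtain ⟨v, hvC, rfl⟩ := hv
  exact ⟨⟨u, hu⟩, C.mem_supp_of_adj_mem_supp hvC (by simpa using hadj), rfl⟩

lemma subset_of_preconnected_induce_of_subset_neighborSet {N P : Set V} {a b : V}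
    (hN : N ⊆ G.neighborSet a) (hconn : (G.induce N).Preconnected)
    (hP : ∀ v ∈ P, ∀ u ∉ P, G.Adj v u → u = a ∨ u = b)
    (hno : ∀ v ∈ P, G.Adj a v → ¬ G.Adj b v) (hmeet : (N ∩ P).Nonempty) : N ⊆ P := by
  obtain ⟨u, huN, huP⟩ := hmeet
  intro s hsN
  by_contra hsP
  obtain ⟨d, -, hd, hd'⟩ :=
    (hconn ⟨u, huN⟩ ⟨s, hsN⟩).some.exists_boundary_dart (Subtype.val ⁻¹' P) huP hsP
  have hadj : G.Adj d.fst d.snd := by simpa using d.adj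
  rcases hP _ hd _ hd' hadj with h | h
  · exact G.irrefl (h ▸ hN d.snd.2)
  · exact hno _ hd (hN d.fst.2) (h ▸ hadj.symm)

lemma Preconnected.union_pair_eq_univ_of_preconnected_induce_neighborSet {P : Set V} {a b : V}
    (hT : T.Preconnected) (hle : T ≤ G) (ha : (G.induce (T.neighborSet a)).Preconnected)
    (hb : (G.induce (T.neighborSet b)).Preconnected) (hPne : P.Nonempty)
    (hP : ∀ v ∈ P, ∀ u ∉ P, G.Adj v u → u = a ∨ u = b)
    (hno : ∀ v ∈ P, G.Adj a v → ¬ G.Adj b v) : P ∪ {a, b} = Set.univ := by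
  have hlocal :
      ∀ c, c = a ∨ c = b → (T.neighborSet c ∩ P).Nonempty → T.neighborSet c ⊆ P := by
    rintro c (rfl | rfl) hmeet
    · exact subset_of_preconnected_induce_of_subset_neighborSet
        (neighborSet_mono hle c) ha hP hno hmeet
    · exact subset_of_preconnected_induce_of_subset_neighborSet (neighborSet_mono hle c) hb
        (fun v hv u hu hadj => (hP v hv u hu hadj).symm)
        (fun v hv hcv hav => hno v hv hav hcv) hmeet
  set S := P ∪ {c | (c = a ∨ c = b) ∧ (T.neighborSet c ∩ P).Nonempty}
  have hS : S = Set.univ := by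
    refine hT.eq_univ_of_adj_mem (hPne.mono Set.subset_union_left) ?_
    rintro v (hv | ⟨hab, hmeet⟩) u hvu
    · by_cases hu : u ∈ P
      · exact Or.inl hu
      · exact Or.inr ⟨hP v hv u hu (hle hvu), v, hvu.symm, hv⟩
    · exact Or.inl (hlocal v hab hmeet hvu)
  refine Set.eq_univ_of_univ_subset (hS ▸ Set.union_subset_union_right P ?_)
  rintro c ⟨hab, -⟩
  exact hab

end SimpleGraph

theorem no_lcst_of_component_without_common_neighbor_general {V : Type*}
    (G : SimpleGraph V) (x y : V)
    (hsep : ¬ (G.induce (({x, y} : Set V)ᶜ)).Preconnected)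
    (C : (G.induce (({x, y} : Set V)ᶜ)).ConnectedComponent)
    (hno : ∀ z : (({x, y} : Set V)ᶜ : Set V),
      (G.induce (({x, y} : Set V)ᶜ)).connectedComponentMk z = C →
        ¬ (G.Adj x ↑z ∧ G.Adj y ↑z)) :
    ¬ ∃ T, IsLCST G T := by
  rintro ⟨T, hle, hT, -, hloc⟩
  set P : Set V := Subtype.val '' C.supp
  have hP : ∀ v ∈ P, ∀ u ∉ P, G.Adj v u → u = x ∨ u = y := fun v hv u hu hadj => by
    simpa [or_iff_not_imp_left] using
      mt (fun huK => SimpleGraph.mem_image_supp_of_adj hv huK hadj) hu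
  have hnoP : ∀ v ∈ P, G.Adj x v → ¬ G.Adj y v := by
    rintro _ ⟨z, hz, rfl⟩ hxz hyz
    exact hno z hz ⟨hxz, hyz⟩
  have hcover : P ∪ {x, y} = Set.univ :=
    hT.preconnected.union_pair_eq_univ_of_preconnected_induce_neighborSet hle
      (hloc x).preconnected (hloc y).preconnected (C.nonempty_supp.image _) hP hnoP
  obtain ⟨w, hw⟩ := SimpleGraph.exists_ne_connectedComponentMk_of_not_preconnected hsep C
  rcases hcover.symm ▸ Set.mem_univ (w : V) with ⟨w', hw'C, hw'w⟩ | hwxy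
  · exact hw (Subtype.ext hw'w ▸ hw'C)
  · exact w.2 hwxy

/-- If `{x, y}` is a separating set of `G` and `H` is a connected component of
`G − {x, y}` containing no common neighbor of `x` and `y`, then `G` has no
locally connected spanning tree. -/
theorem no_lcst_of_component_without_common_neighbor {V : Type*} [Fintype V]
    (G : SimpleGraph V) (x y : V) (hxy : x ≠ y)
    (hsep : ¬ (G.induce (({x, y} : Set V)ᶜ)).Preconnected)
    (C : (G.induce (({x, y} : Set V)ᶜ)).ConnectedComponent)
    (hno : ∀ z : (({x, y} : Set V)ᶜ : Set V),
      (G.induce (({x, y} : Set V)ᶜ)).connectedComponentMk z = C →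
        ¬ (G.Adj x ↑z ∧ G.Adj y ↑z)) :
    ¬ ∃ T, IsLCST G T :=
  no_lcst_of_component_without_common_neighbor_general G x y hsep C hno
end

section
/- Let (v_1, …, v_n) be a perfect elimination order of a chordal graph G, and let v_i be any vertex with i < n. Then every shortest path from v_i to v_n in G visits vertices with strictly increasing indices. -/
/-- The identity ordering on `Fin n` is a perfect elimination order of `G`:
each vertex `i` is simplicial in the subgraph induced by `{i, i+1, …}`,
i.e. any two neighbors of `i` with larger index are adjacent. -/
def IsPEO {n : ℕ} (G : SimpleGraph (Fin n)) : Prop :=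
  ∀ i j k : Fin n, i < j → i < k → j ≠ k → G.Adj i j → G.Adj i k → G.Adj j k

/-!
Let `a → b → c → ⋯` be a shortest walk to the top vertex, and suppose inductively that its tail
from `b` increases, so `b < c`. If we had `b < a`, then `a` and `c` would be two later neighbours
of `b`, hence adjacent by the perfect elimination property (or equal), and `a → c → ⋯` would be
a shorter walk.
-/

namespace SimpleGraph.Walk

variable {V : Type*} {G : SimpleGraph V}

def IsShortest {u v : V} (p : G.Walk u v) : Prop :=
  ∀ q : G.Walk u v, p.length ≤ q.length

namespace IsShortest

theorem tail {u w v : V} {h : G.Adj u w} {p : G.Walk w v} (hp : (cons h p).IsShortest) :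
    p.IsShortest :=
  fun q => by simpa using hp (cons h q)

theorem ne_of_cons_cons {a b c v : V} {hab : G.Adj a b} {hbc : G.Adj b c} {q : G.Walk c v}
    (hp : (cons hab (cons hbc q)).IsShortest) : a ≠ c := by
  rintro rfl
  simpa using hp q

theorem not_adj_of_cons_cons {a b c v : V} {hab : G.Adj a b} {hbc : G.Adj b c} {q : G.Walk c v}
    (hp : (cons hab (cons hbc q)).IsShortest) : ¬G.Adj a c :=
  fun hac => by simpa using hp (cons hac q)

end IsShortest

theorem isChain_support_cons_iff {R : V → V → Prop} {a u v : V} {h : G.Adj a u}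
    {p : G.Walk u v} : (cons h p).support.IsChain R ↔ R a u ∧ p.support.IsChain R := by
  rw [support_cons, ← p.cons_tail_support, List.isChain_cons_cons, p.cons_tail_support]

end SimpleGraph.Walk

open SimpleGraph Walk

theorem IsPEO.isChain_support_of_isShortest {m : ℕ} {G : SimpleGraph (Fin m)} (hpeo : IsPEO G)
    {u v : Fin m} (hv : IsTop v) {p : G.Walk u v} (hp : p.IsShortest) :
    p.support.IsChain (· < ·) := by
  induction p with
  | nil => simp
  | @cons a b v hab q ih =>
    have hq : q.support.IsChain (· < ·) := ih hv hp.tail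
    have hlt : a < b := by
      cases q with
      | nil => exact lt_of_le_of_ne (hv a) hab.ne
      | @cons _ c _ hbc q =>
        have hbc_lt : b < c := (isChain_support_cons_iff.mp hq).1
        refine (lt_or_gt_of_ne hab.ne).resolve_right fun hba => ?_
        exact hp.not_adj_of_cons_cons
          (hpeo b a c hba hbc_lt hp.ne_of_cons_cons hab.symm hbc)
    exact isChain_support_cons_iff.mpr ⟨hlt, hq⟩

theorem shortest_path_increasing_of_peo_general {n : ℕ} (G : SimpleGraph (Fin (n + 1)))
    (hpeo : IsPEO G) (i : Fin (n + 1))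
    (p : G.Walk i (Fin.last n))
    (hshort : ∀ q : G.Walk i (Fin.last n), p.length ≤ q.length) :
    p.support.Chain' (· < ·) :=
  hpeo.isChain_support_of_isShortest Fin.le_last hshort

/-- In a chordal graph with perfect elimination order `(v_0, …, v_n)`, every
shortest path from `v_i` (with `i < n`) to the last vertex `v_n` visits
vertices with strictly increasing indices. -/
theorem shortest_path_increasing_of_peo {n : ℕ} (G : SimpleGraph (Fin (n + 1)))
    (hpeo : IsPEO G) (i : Fin (n + 1)) (hi : i < Fin.last n)
    (p : G.Walk i (Fin.last n)) (hp : p.IsPath)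
    (hshort : ∀ q : G.Walk i (Fin.last n), p.length ≤ q.length) :
    p.support.Chain' (· < ·) :=
  shortest_path_increasing_of_peo_general G hpeo i p hshort
end

section
/- Let (v_1, …, v_n) be a perfect elimination order of a chordal graph G and let k < n be a positive integer. Then G is k-connected if and only if |N_{G_i}(v_i)| ≥ k for all 1 ≤ i ≤ n − k, where G_i = G[{v_i, v_{i+1}, …, v_n}]. -/
/-- The defining property of `IsPEO`, for the linear order of an arbitrary vertex type. -/
def SimpleGraph.IsPerfectEliminationOrder {V : Type*} [LinearOrder V] (G : SimpleGraph V) :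
    Prop :=
  ∀ ⦃i j k : V⦄, i < j → i < k → j ≠ k → G.Adj i j → G.Adj i k → G.Adj j k

theorem Fin.ncard_Ioi {n : ℕ} (i : Fin n) : (Set.Ioi i).ncard = n - 1 - i := by
  rw [← Finset.coe_Ioi, Set.ncard_coe_finset, Fin.card_Ioi]

namespace SimpleGraph

variable {V : Type*} [LinearOrder V] {G : SimpleGraph V}

theorem connected_of_forall_adj_or_exists_adj_gt [Nonempty V] [WellFoundedGT V] (t : V)
    (h : ∀ a, a ≠ t → G.Adj a t ∨ ∃ b, a < b ∧ G.Adj a b) : G.Connected := by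
  have hreach (a : V) : G.Reachable a t := by
    induction a using WellFoundedGT.induction with
    | _ a ih =>
      by_cases hat : a = t
      · exact hat ▸ Reachable.refl _
      obtain hadj | ⟨b, hab, hadj⟩ := h a hat
      · exact hadj.reachable
      · exact hadj.reachable.trans (ih b hab)
  exact (connected_iff_exists_forall_reachable G).mpr ⟨t, fun a => (hreach a).symm⟩

namespace IsPerfectEliminationOrder

theorem induce (hG : G.IsPerfectEliminationOrder) (s : Set V) :
    (G.induce s).IsPerfectEliminationOrder :=
  fun _ _ _ hij hik hjk => hG hij hik (Subtype.coe_ne_coe.mpr hjk)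

/-- The two neighbours of `m` on the walk are later neighbours of `m`, hence adjacent or equal,
so the walk can be shortcut around `m`. -/
theorem dist_lt_length {a b m : V} (hG : G.IsPerfectEliminationOrder) (p : G.Walk a b)
    (hm : m ∈ p.support) (hma : m ≠ a) (hmb : m ≠ b) (hmin : ∀ v ∈ p.support, m ≤ v) :
    G.dist a b < p.length := by
  obtain ⟨q, r, rfl⟩ := Walk.mem_support_iff_exists_append.mp hm
  obtain ⟨u, hmu, q', hq'⟩ := q.reverse.exists_eq_cons_of_ne hma
  obtain ⟨w, hmw, r', rfl⟩ := r.exists_eq_cons_of_ne hmb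
  have hu : u ∈ (q.append (.cons hmw r')).support := by
    have : u ∈ q.reverse.support := by simp [hq']
    exact Walk.support_subset_support_append_left _ _ (by simpa using this)
  have hw : w ∈ (q.append (.cons hmw r')).support := by simp
  have hmu' : m < u := (hmin u hu).lt_of_ne (G.ne_of_adj hmu)
  have hmw' : m < w := (hmin w hw).lt_of_ne (G.ne_of_adj hmw)
  have hlen : q.length = q'.length + 1 := by rw [← q.length_reverse, hq', Walk.length_cons]
  rw [Walk.length_append, Walk.length_cons, hlen]
  by_cases huw : u = w
  · subst huw
    calc G.dist a b ≤ (q'.reverse.append r').length := dist_le _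
      _ < _ := by simp only [Walk.length_append, Walk.length_reverse]; omega
  · calc G.dist a b ≤ (q'.reverse.append (.cons (hG hmu' hmw' huw hmu hmw) r')).length :=
          dist_le _
      _ < _ := by simp only [Walk.length_append, Walk.length_reverse, Walk.length_cons]; omega

theorem exists_walk_forall_support_ge {a b : V} (hG : G.IsPerfectEliminationOrder)
    (h : G.Reachable a b) : ∃ p : G.Walk a b, ∀ v ∈ p.support, min a b ≤ v := by
  obtain ⟨p, hp⟩ := h.exists_walk_length_eq_dist
  refine ⟨p, ?_⟩
  by_contra! ⟨v, hv, hvab⟩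
  have hm : p.support.min p.support_ne_nil < min a b := (List.min_le_of_mem hv).trans_lt hvab
  exact (hG.dist_lt_length p (List.min_mem _) (lt_min_iff.mp hm).1.ne (lt_min_iff.mp hm).2.ne
    (fun _ => List.min_le_of_mem)).ne hp.symm

theorem exists_adj_gt_of_reachable {a b : V} (hG : G.IsPerfectEliminationOrder)
    (hab : a < b) (h : G.Reachable a b) : ∃ c, a < c ∧ G.Adj a c := by
  obtain ⟨p, hp⟩ := hG.exists_walk_forall_support_ge h
  obtain ⟨c, hac, p', rfl⟩ := p.exists_eq_cons_of_ne hab.ne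
  rw [min_eq_left hab.le] at hp
  exact ⟨c, (hp c (by simp)).lt_of_ne (G.ne_of_adj hac), hac⟩

theorem exists_adj_gt_notMem_of_connected_induce_compl {S : Set V} {a b : V}
    (hG : G.IsPerfectEliminationOrder) (hS : (G.induce Sᶜ).Connected) (haS : a ∉ S)
    (hbS : b ∉ S) (hab : a < b) : ∃ c ∉ S, a < c ∧ G.Adj a c := by
  obtain ⟨⟨c, hcS⟩, hac, hadj⟩ := (hG.induce Sᶜ).exists_adj_gt_of_reachable
    (a := ⟨a, haS⟩) (b := ⟨b, hbS⟩) hab (hS.preconnected _ _)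
  exact ⟨c, hcS, hac, hadj⟩

theorem connected_induce_compl_of_le_ncard {n k : ℕ} {G : SimpleGraph (Fin n)}
    (hG : G.IsPerfectEliminationOrder) (hkn : k < n)
    (hdeg : ∀ i : Fin n, (i : ℕ) + k < n → k ≤ {j : Fin n | i < j ∧ G.Adj i j}.ncard)
    {S : Set (Fin n)} (hS : S.ncard < k) : (G.induce Sᶜ).Connected := by
  set i₀ : Fin n := ⟨n - k - 1, by omega⟩
  have htop : (Set.Ioi i₀).ncard = k := by rw [Fin.ncard_Ioi]; simp only [i₀]; omega
  have hi₀_adj : {j | i₀ < j ∧ G.Adj i₀ j} = Set.Ioi i₀ :=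
    Set.eq_of_subset_of_ncard_le (fun j hj => hj.1)
      (htop ▸ hdeg i₀ (by simp only [i₀]; omega))
  obtain ⟨t, hi₀t, htS⟩ := Set.exists_mem_notMem_of_ncard_lt_ncard (htop ▸ hS)
  have : Nonempty (Sᶜ : Set (Fin n)) := ⟨⟨t, htS⟩⟩
  refine connected_of_forall_adj_or_exists_adj_gt ⟨t, htS⟩ fun ⟨a, haS⟩ hat => ?_
  by_cases hi₀a : i₀ < a
  · exact .inl (hG hi₀a hi₀t (fun h => hat (Subtype.ext h)) (hi₀_adj.ge hi₀a).2
      (hi₀_adj.ge hi₀t).2)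
  · obtain ⟨b, ⟨hab, hadj⟩, hbS⟩ := Set.exists_mem_notMem_of_ncard_lt_ncard
      (hS.trans_le (hdeg a (by simp only [i₀, not_lt, Fin.le_def] at hi₀a; omega)))
    exact .inr ⟨⟨b, hbS⟩, hab, hadj⟩

end IsPerfectEliminationOrder

end SimpleGraph

theorem k_connected_iff_later_degree_of_peo_general {n : ℕ} (G : SimpleGraph (Fin n))
    (hpeo : IsPEO G) (k : ℕ) (hkn : k < n) :
    (∀ S : Set (Fin n), S.ncard < k → (G.induce Sᶜ).Connected) ↔
      (∀ i : Fin n, (i : ℕ) + k < n →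
        k ≤ {j : Fin n | i < j ∧ G.Adj i j}.ncard) := by
  have hG : G.IsPerfectEliminationOrder := hpeo
  refine ⟨fun hconn i hik => ?_,
    fun hdeg S hS => hG.connected_induce_compl_of_le_ncard hkn hdeg hS⟩
  by_contra! hlt
  set S := {j : Fin n | i < j ∧ G.Adj i j}
  obtain ⟨j, hij, hjS⟩ := Set.exists_mem_notMem_of_ncard_lt_ncard (s := S) (t := Set.Ioi i)
    (by rw [Fin.ncard_Ioi]; omega)
  obtain ⟨c, hcS, hic, hadj⟩ :=
    hG.exists_adj_gt_notMem_of_connected_induce_compl (hconn S hlt) (fun h => h.1.false) hjS hij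
  exact hcS ⟨hic, hadj⟩

/-- Let the identity ordering on `Fin n` be a perfect elimination order of a
chordal graph `G` and let `0 < k < n`.  Then `G` is `k`-connected (removing any
set of fewer than `k` vertices leaves a connected graph) if and only if each
vertex `v_i` with `i ≤ n − k` (in 1-indexed terms) has at least `k` neighbors of
larger index. -/
theorem k_connected_iff_later_degree_of_peo {n : ℕ} (G : SimpleGraph (Fin n))
    (hpeo : IsPEO G) (k : ℕ) (hk : 0 < k) (hkn : k < n) :
    (∀ S : Set (Fin n), S.ncard < k → (G.induce Sᶜ).Connected) ↔
      (∀ i : Fin n, (i : ℕ) + k < n →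
        k ≤ {j : Fin n | i < j ∧ G.Adj i j}.ncard) :=
  k_connected_iff_later_degree_of_peo_general G hpeo k hkn
end

section
/- A 2-connected strongly chordal graph on at least 3 vertices has a locally connected spanning tree. Consequently, a strongly chordal graph G with at least 3 vertices has a locally connected spanning tree if and only if G is 2-connected. -/
/-- The identity ordering on `Fin n` is a strong elimination order of `G`. -/
def IsSEO {n : ℕ} (G : SimpleGraph (Fin n)) : Prop :=
  ∀ i j k : Fin n, i ≤ j → j ≤ k →
    (j = i ∨ G.Adj i j) → (k = i ∨ G.Adj i k) →
      ∀ w : Fin n, i ≤ w → (w = j ∨ G.Adj j w) → (w = k ∨ G.Adj k w)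

/-!
Order the vertices by a strong elimination order, with last vertex `r`. Every vertex `z ≠ r`
gets a later neighbour `par z` that lies in the closed neighbourhood of every neighbour `w` of
`z` whose closed neighbourhood reaches beyond `z`: take the largest closed neighbour of the
smallest such `w`. The parent edges form a spanning tree. For adjacent `x` and `y`, the paths
from `x` and from `y` to the root stay inside `N[x] ∩ N[y]` until they meet at its largest
vertex. Hence sending each `x ≠ v` to the tree neighbour of `v` in the direction of `x` maps
edges of `G - v` to edges or single vertices, and the connectivity of `G - v` passes to the
tree neighbourhood of `v`. Conversely, a tree walk through `v` can be rerouted inside the tree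
neighbourhood of `v`, so a locally connected spanning tree forces `G - v` to be connected.
-/

open Relation

namespace SimpleGraph

variable {V W : Type*} {G : SimpleGraph V} {G' : SimpleGraph W}

lemma Reachable.map_of_forall_adj {f : V → W}
    (hf : ∀ ⦃a b⦄, G.Adj a b → G'.Reachable (f a) (f b)) {a b : V} (h : G.Reachable a b) :
    G'.Reachable (f a) (f b) := by
  rw [reachable_iff_reflTransGen] at h ⊢
  exact ReflTransGen.lift' f (fun a b hab => (reachable_iff_reflTransGen _ _).1 (hf hab)) a b h

def closedNeighborSet (G : SimpleGraph V) (v : V) : Set V := insert v (G.neighborSet v)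

lemma mem_closedNeighborSet {u v : V} : u ∈ G.closedNeighborSet v ↔ u = v ∨ G.Adj v u :=
  Iff.rfl

lemma mem_closedNeighborSet_comm {u v : V} :
    u ∈ G.closedNeighborSet v ↔ v ∈ G.closedNeighborSet u := by
  simp only [mem_closedNeighborSet, eq_comm, adj_comm]

lemma Iso.connected_induce_ne_iff (φ : G ≃g G') (v : V) :
    (G.induce {u | u ≠ v}).Connected ↔ (G'.induce {w | w ≠ φ v}).Connected :=
  (φ.induce ⟨fun _ hu => φ.injective.ne hu, φ.injective.injOn,
    fun w (hw : w ≠ φ v) => ⟨φ.symm w, fun h => hw (by rw [← h, φ.apply_symm_apply]),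
      φ.apply_symm_apply w⟩⟩)
    |>.connected_iff

end SimpleGraph

open SimpleGraph

section LocallyConnectedSpanningTree

variable {V W : Type*} {G T : SimpleGraph V} {G' : SimpleGraph W}

lemma IsLCST.connected (h : IsLCST G T) : G.Connected :=
  h.2.1.mono h.1

lemma IsLCST.connected_induce_ne (h : IsLCST G T) (v : V) :
    (G.induce {u | u ≠ v}).Connected := by
  classical
  obtain ⟨hle, hT, -, hloc⟩ := h
  have hN : T.neighborSet v ⊆ {u | u ≠ v} := fun u hu => (T.ne_of_adj hu).symm
  obtain ⟨c⟩ := (hloc v).nonempty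
  let f : V → {u | u ≠ v} := fun u => if hu : u = v then ⟨c, hN c.2⟩ else ⟨u, hu⟩
  have hf : ∀ u (hu : u ≠ v), f u = ⟨u, hu⟩ := fun u hu => dif_neg hu
  have hfv : ∀ a (ha : a ∈ T.neighborSet v), (G.induce {u | u ≠ v}).Reachable (f v) (f a) := by
    intro a ha
    rw [hf a (hN ha), show f v = ⟨c, hN c.2⟩ from dif_pos rfl]
    exact ((hloc v).preconnected c ⟨a, ha⟩).map (G.induceHomOfLE hN).toHom
  refine (connected_iff _).2 ⟨fun ⟨a, ha⟩ ⟨b, hb⟩ => ?_, ⟨⟨c, hN c.2⟩⟩⟩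
  rw [← hf a ha, ← hf b hb]
  refine (hT.preconnected a b).map_of_forall_adj fun a b hab => ?_
  by_cases hav : a = v
  · subst hav
    exact hfv b hab
  by_cases hbv : b = v
  · subst hbv
    exact (hfv a hab.symm).symm
  rw [hf a hav, hf b hbv]
  exact Adj.reachable (hle hab)

lemma IsLCST.of_iso (φ : G ≃g G') (h : IsLCST G T) : IsLCST G' (T.comap φ.symm) := by
  obtain ⟨hle, hT, hacyc, hloc⟩ := h
  have ψ : T.comap φ.symm ≃g T := Iso.comap φ.symm.toEquiv T
  refine ⟨fun a b hab => φ.symm.map_adj_iff.1 (hle hab), ψ.connected_iff.2 hT,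
    ψ.isAcyclic_iff.2 hacyc, fun w => ?_⟩
  exact (φ.symm.induce φ.symm.bijective.bijOn_preimage).connected_iff.2 (hloc (φ.symm w))

end LocallyConnectedSpanningTree

section Ancestors

variable {V : Type*} {f : V → V}

lemma le_of_reflTransGen [LinearOrder V] (hf : ∀ z, z ≤ f z) {x a : V}
    (h : ReflTransGen (f · = ·) x a) : x ≤ a := by
  induction h with
  | refl => rfl
  | tail _ hbc ih => exact ih.trans (hbc ▸ hf _)

lemma reflTransGen_of_le [LinearOrder V] (hf : ∀ z, z ≤ f z) {x a b : V}
    (ha : ReflTransGen (f · = ·) x a) (hb : ReflTransGen (f · = ·) x b) (hab : a ≤ b) :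
    ReflTransGen (f · = ·) a b := by
  rcases ha.total_of_right_unique (fun _ _ _ h h' => h.symm.trans h') hb with h | h
  · exact h
  · rw [(le_of_reflTransGen hf h).antisymm hab]

lemma reflTransGen_apply_of_ne {v a : V} (h : ReflTransGen (f · = ·) v a) (hva : v ≠ a) :
    ReflTransGen (f · = ·) (f v) a := by
  rcases h.cases_head with rfl | ⟨c, rfl, hc⟩
  · exact absurd rfl hva
  · exact hc

lemma exists_apply_eq_of_reflTransGen {x v : V} (h : ReflTransGen (f · = ·) x v)
    (hxv : x ≠ v) : ∃ c, ReflTransGen (f · = ·) x c ∧ f c = v ∧ c ≠ v := by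
  induction h with
  | refl => exact absurd rfl hxv
  | @tail b c hxb hbc ih =>
    by_cases hb : b = c
    · subst hb
      exact ih hxv
    · exact ⟨b, hxb, hbc, hb⟩

lemma eq_of_reflTransGen_of_apply_eq [LinearOrder V] (hf : ∀ z, z ≤ f z) {a b v : V}
    (hab : ReflTransGen (f · = ·) a b) (ha : f a = v) (hb : f b = v) (hbv : b ≠ v) : a = b :=
  hab.cases_head.resolve_right fun ⟨_, had, hdb⟩ =>
    hbv ((hb ▸ hf b).antisymm (had.symm.trans ha ▸ le_of_reflTransGen hf hdb))

lemma reflTransGen_of_mem_of_apply_mem [LinearOrder V] [WellFoundedGT V] (hf : ∀ z, z ≤ f z)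
    {s : Set V} {M : V} (hmax : ∀ b ∈ s, b ≤ M) (hs : ∀ a ∈ s, a < M → a < f a ∧ f a ∈ s)
    {a : V} (ha : a ∈ s) :
    ReflTransGen (f · = ·) a M ∧ ∀ b, ReflTransGen (f · = ·) a b → b ≤ M → b ∈ s := by
  induction a using WellFoundedGT.induction with
  | _ a ih =>
  rcases (hmax a ha).eq_or_lt with rfl | haM
  · exact ⟨.refl, fun b hab hba => (le_of_reflTransGen hf hab).antisymm hba ▸ ha⟩
  obtain ⟨hlt, hfa⟩ := hs a ha haM
  obtain ⟨hfaM, hpath⟩ := ih (f a) hlt hfa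
  refine ⟨.head rfl hfaM, fun b hab hbM => ?_⟩
  rcases hab.cases_head with rfl | ⟨c, rfl, hcb⟩
  · exact ha
  · exact hpath b hcb hbM

end Ancestors

section ParentTree

variable {V : Type*}

def parentTree (par : V → V) : SimpleGraph V :=
  SimpleGraph.fromRel fun a b => par a = b

variable {par : V → V}

lemma parentTree_adj {a b : V} :
    (parentTree par).Adj a b ↔ a ≠ b ∧ (par a = b ∨ par b = a) :=
  fromRel_adj _ a b

lemma parentTree_reachable_of_reflTransGen {a b : V} (h : ReflTransGen (par · = ·) a b) :
    (parentTree par).Reachable a b := by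
  induction h with
  | refl => rfl
  | @tail b c _ hbc ih =>
    by_cases hb : b = c
    · exact hb ▸ ih
    · exact ih.trans (Adj.reachable ⟨hb, Or.inl hbc⟩)

variable [LinearOrder V]

/-- The last field is what makes the tree of parent edges locally connected. -/
structure IsParentMap (G : SimpleGraph V) (r : V) (par : V → V) : Prop where
  map_root : par r = r
  lt_map : ∀ z, z ≠ r → z < par z
  adj_map : ∀ z, z ≠ r → G.Adj z (par z)
  mem_closedNeighborSet : ∀ z, z ≠ r → ∀ w ∈ G.closedNeighborSet z,
    (∃ s ∈ G.closedNeighborSet w, z < s) → par z ∈ G.closedNeighborSet w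

variable {G : SimpleGraph V} {r : V}

namespace IsParentMap

variable (hp : IsParentMap G r par)
include hp

lemma le_map (z : V) : z ≤ par z := by
  rcases eq_or_ne z r with rfl | hz
  · exact hp.map_root.ge
  · exact (hp.lt_map z hz).le

lemma ne_root_of_apply_ne {z : V} (hz : par z ≠ z) : z ≠ r := by
  rintro rfl
  exact hz hp.map_root

lemma parentTree_le : parentTree par ≤ G := by
  rintro a b ⟨hab, rfl | rfl⟩
  · exact hp.adj_map a (hp.ne_root_of_apply_ne hab.symm)
  · exact (hp.adj_map b (hp.ne_root_of_apply_ne hab)).symm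

lemma reflTransGen_root [WellFoundedGT V] (z : V) : ReflTransGen (par · = ·) z r := by
  induction z using WellFoundedGT.induction with
  | _ z ih =>
    rcases eq_or_ne z r with rfl | hz
    · exact .refl
    · exact .head rfl (ih _ (hp.lt_map z hz))

lemma le_root [WellFoundedGT V] (z : V) : z ≤ r :=
  le_of_reflTransGen hp.le_map (hp.reflTransGen_root z)

lemma parentTree_connected [WellFoundedGT V] : (parentTree par).Connected :=
  (connected_iff_exists_forall_reachable _).2
    ⟨r, fun z => (parentTree_reachable_of_reflTransGen (hp.reflTransGen_root z)).symm⟩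

lemma parentTree_isAcyclic [Finite V] : (parentTree par).IsAcyclic := by
  let e : {z // z ≠ r} → (parentTree par).edgeSet := fun z =>
    ⟨s(z, par z), (hp.lt_map z z.2).ne, Or.inl rfl⟩
  have he : e.Bijective := by
    refine ⟨fun z₁ z₂ h => Subtype.ext ?_, ?_⟩
    · rcases Sym2.eq_iff.1 (congrArg Subtype.val h) with ⟨h, -⟩ | ⟨h₁, h₂⟩
      · exact h
      · exact absurd ((hp.lt_map z₁ z₁.2).trans_eq h₂) (h₁ ▸ (hp.lt_map z₂ z₂.2).not_gt)
    · rintro ⟨x, hx⟩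
      induction x using Sym2.ind with
      | _ a b =>
      obtain ⟨hab, h | h⟩ := parentTree_adj.1 (show (parentTree par).Adj a b from hx)
      · subst h
        exact ⟨⟨a, hp.ne_root_of_apply_ne hab.symm⟩, rfl⟩
      · subst h
        exact ⟨⟨b, hp.ne_root_of_apply_ne hab⟩, Subtype.ext Sym2.eq_swap⟩
  refine ((isTree_iff_connected_and_card).2 ⟨hp.parentTree_connected, ?_⟩).isAcyclic
  rw [← Nat.card_eq_of_bijective e he, ← Finite.card_option,
    Nat.card_congr (Equiv.optionSubtypeNe r)]

end IsParentMap

end ParentTree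

section Towards

variable {V : Type*} {G : SimpleGraph V} {par : V → V} {v x : V}

open Classical in
/-- The neighbour of `v` in the parent tree in the direction of `x`: the child of `v` on the
path from `x` up to `v` if `v` is a proper ancestor of `x`, and the parent of `v` otherwise. -/
noncomputable def towards (par : V → V) (v x : V) : V :=
  if h : ∃ c, ReflTransGen (par · = ·) x c ∧ par c = v ∧ c ≠ v then h.choose else par v

lemma towards_of_not_exists (h : ¬∃ c, ReflTransGen (par · = ·) x c ∧ par c = v ∧ c ≠ v) :
    towards par v x = par v :=
  dif_neg h

variable [LinearOrder V]

lemma towards_eq (hf : ∀ z, z ≤ par z) {c : V} (hxc : ReflTransGen (par · = ·) x c)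
    (hcv : par c = v) (hc : c ≠ v) : towards par v x = c := by
  have h : ∃ c, ReflTransGen (par · = ·) x c ∧ par c = v ∧ c ≠ v := ⟨c, hxc, hcv, hc⟩
  obtain ⟨hxd, hdv, hd⟩ := h.choose_spec
  rw [towards, dif_pos h]
  rcases hxd.total_of_right_unique (fun _ _ _ h h' => h.symm.trans h') hxc with h' | h'
  · exact eq_of_reflTransGen_of_apply_eq hf h' hdv hcv hc
  · exact (eq_of_reflTransGen_of_apply_eq hf h' hcv hdv hd).symm

lemma towards_eq_self (hf : ∀ z, z ≤ par z) {a : V} (h : (parentTree par).Adj v a) :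
    towards par v a = a := by
  obtain ⟨hva, hpv | hpa⟩ := parentTree_adj.1 h
  · rw [towards_of_not_exists, hpv]
    rintro ⟨c, hac, hcv, hc⟩
    have hvc : v < c :=
      (hpv ▸ (hf v).lt_of_ne fun h => hva (h.trans hpv)).trans_le (le_of_reflTransGen hf hac)
    exact hc ((hcv ▸ hf c).antisymm hvc.le)
  · exact towards_eq hf .refl hpa hva.symm

namespace IsParentMap

variable {r : V} (hp : IsParentMap G r par)
include hp

lemma towards_adj [WellFoundedGT V] (hxv : x ≠ v) :
    (parentTree par).Adj v (towards par v x) := by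
  by_cases h : ∃ c, ReflTransGen (par · = ·) x c ∧ par c = v ∧ c ≠ v
  · obtain ⟨c, hxc, hcv, hc⟩ := h
    rw [towards_eq hp.le_map hxc hcv hc]
    exact parentTree_adj.2 ⟨hc.symm, Or.inr hcv⟩
  · have hv : v ≠ r := by
      rintro rfl
      exact h (exists_apply_eq_of_reflTransGen (hp.reflTransGen_root x) hxv)
    rw [towards_of_not_exists h]
    exact parentTree_adj.2 ⟨(hp.lt_map v hv).ne, Or.inl rfl⟩

lemma lt_map_and_mem_closedNeighborSet_inter [WellFoundedGT V] {y M a : V}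
    (hM : M ∈ G.closedNeighborSet x ∩ G.closedNeighborSet y)
    (ha : a ∈ G.closedNeighborSet x ∩ G.closedNeighborSet y) (haM : a < M) :
    a < par a ∧ par a ∈ G.closedNeighborSet x ∩ G.closedNeighborSet y := by
  have har : a ≠ r := (haM.trans_le (hp.le_root M)).ne
  exact ⟨hp.lt_map a har,
    hp.mem_closedNeighborSet a har x (mem_closedNeighborSet_comm.1 ha.1) ⟨M, hM.1, haM⟩,
    hp.mem_closedNeighborSet a har y (mem_closedNeighborSet_comm.1 ha.2) ⟨M, hM.2, haM⟩⟩

lemma towards_mem_closedNeighborSet [Finite V] {y : V} (hxy : G.Adj x y) (hxv : x ≠ v)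
    (hne : towards par v x ≠ towards par v y) : towards par v x ∈ G.closedNeighborSet y := by
  have hxK : x ∈ G.closedNeighborSet x ∩ G.closedNeighborSet y := ⟨Or.inl rfl, Or.inr hxy.symm⟩
  have hyK : y ∈ G.closedNeighborSet x ∩ G.closedNeighborSet y := ⟨Or.inr hxy, Or.inl rfl⟩
  obtain ⟨M, hM, hmax⟩ := Set.exists_max_image _ id (Set.toFinite _) ⟨x, hxK⟩
  have hK := fun a => hp.lt_map_and_mem_closedNeighborSet_inter (a := a) hM
  obtain ⟨hxM, hx⟩ := reflTransGen_of_mem_of_apply_mem hp.le_map hmax hK hxK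
  obtain ⟨hyM, hy⟩ := reflTransGen_of_mem_of_apply_mem hp.le_map hmax hK hyK
  by_cases hX : ∃ c, ReflTransGen (par · = ·) x c ∧ par c = v ∧ c ≠ v
  · obtain ⟨c, hxc, hcv, hc⟩ := hX
    rw [towards_eq hp.le_map hxc hcv hc] at hne ⊢
    rcases le_or_gt c M with hcM | hMc
    · exact (hx c hxc hcM).2
    · have hyc := hyM.trans (reflTransGen_of_le hp.le_map hxM hxc hMc.le)
      exact absurd (towards_eq hp.le_map hyc hcv hc).symm hne
  rw [towards_of_not_exists hX] at hne ⊢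
  by_cases hY : ∃ d, ReflTransGen (par · = ·) y d ∧ par d = v ∧ d ≠ v
  · obtain ⟨d, hyd, hdv, -⟩ := hY
    have hyv : ReflTransGen (par · = ·) y v := hyd.tail hdv
    rcases le_or_gt M v with hMv | hvM
    · have hxv' := hxM.trans (reflTransGen_of_le hp.le_map hyM hyv hMv)
      exact absurd (exists_apply_eq_of_reflTransGen hxv' hxv) hX
    · have hvM' :=
        reflTransGen_apply_of_ne (reflTransGen_of_le hp.le_map hyv hyM hvM.le) hvM.ne
      exact (hy (par v) (hyv.tail rfl) (le_of_reflTransGen hp.le_map hvM')).2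
  · exact absurd (towards_of_not_exists hY).symm hne

lemma towards_eq_or_adj [Finite V] {y : V} (hxy : G.Adj x y) (hxv : x ≠ v) (hyv : y ≠ v) :
    towards par v x = towards par v y ∨ G.Adj (towards par v x) (towards par v y) := by
  rcases eq_or_ne (towards par v x) (towards par v y) with h | hne
  · exact Or.inl h
  have hfix := towards_eq_self hp.le_map (hp.towards_adj hxv)
  -- the branch `c` of `x` is adjacent to `y` and is its own branch, so the same lemma applies
  -- to the edge `yc`
  have hyc : G.Adj y (towards par v x) := by
    refine (hp.towards_mem_closedNeighborSet hxy hxv hne).resolve_left fun h => hne ?_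
    rw [← h, hfix]
  have h := hp.towards_mem_closedNeighborSet hyc hyv (hfix.symm ▸ hne.symm)
  exact Or.inr (h.resolve_left hne.symm)

lemma connected_induce_neighborSet [Finite V] (hv : (G.induce {u | u ≠ v}).Connected) :
    (G.induce ((parentTree par).neighborSet v)).Connected := by
  let f : {u | u ≠ v} → (parentTree par).neighborSet v :=
    fun x => ⟨towards par v x, hp.towards_adj x.2⟩
  have hf (a : (parentTree par).neighborSet v) :
      f ⟨a, ((parentTree par).ne_of_adj a.2).symm⟩ = a :=
    Subtype.ext (towards_eq_self hp.le_map a.2)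
  refine (connected_iff _).2 ⟨fun a b => ?_, hv.nonempty.map f⟩
  rw [← hf a, ← hf b]
  refine (hv.preconnected _ _).map_of_forall_adj fun x y hxy => ?_
  rcases hp.towards_eq_or_adj hxy x.2 y.2 with h | h
  · exact (Subtype.ext h : f x = f y) ▸ .refl _
  · exact Adj.reachable h

lemma isLCST [Finite V] (hcut : ∀ v, (G.induce {u | u ≠ v}).Connected) :
    IsLCST G (parentTree par) :=
  ⟨hp.parentTree_le, hp.parentTree_connected, hp.parentTree_isAcyclic,
    fun _ => hp.connected_induce_neighborSet (hcut _)⟩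

end IsParentMap

end Towards

section StrongEliminationOrder

variable {n : ℕ} {G : SimpleGraph (Fin n)}

lemma IsSEO.mem_closedNeighborSet_of_mem (hG : IsSEO G) {i j k : Fin n} (hij : i ≤ j)
    (hik : i ≤ k) (hj : j ∈ G.closedNeighborSet i) (hk : k ∈ G.closedNeighborSet i) :
    j ∈ G.closedNeighborSet k := by
  rcases le_total j k with hjk | hkj
  · exact hG i j k hij hjk hj hk j hij (Or.inl rfl)
  · exact mem_closedNeighborSet_comm.1 (hG i k j hik hkj hk hj k hik (Or.inl rfl))

lemma IsSEO.reflTransGen_lt_adj (hG : IsSEO G) (hc : G.Connected) {r : Fin n} (hr : IsTop r)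
    (u : Fin n) : ReflTransGen (fun a b => G.Adj a b ∧ a < b) u r := by
  have step : ∀ v, ReflTransGen (fun a b => G.Adj a b ∧ a < b) v r →
      ∀ u, G.Adj u v → ReflTransGen (fun a b => G.Adj a b ∧ a < b) u r := by
    intro v hv
    induction hv using ReflTransGen.head_induction_on with
    | refl => exact fun u hu => .single ⟨hu, (hr u).lt_of_ne hu.ne⟩
    | head hvw hw ih =>
      intro u hu
      rcases hu.ne.lt_or_gt with huv | hvu
      · exact .head ⟨hu, huv⟩ (.head hvw hw)
      · rcases hG.mem_closedNeighborSet_of_mem hvu.le hvw.2.le (Or.inr hu.symm) (Or.inr hvw.1)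
          with rfl | h
        · exact hw
        · exact ih u h.symm
  induction (reachable_iff_reflTransGen u r).1 (hc u r) using ReflTransGen.head_induction_on with
  | refl => exact .refl
  | head huv _ ih => exact step _ ih _ huv

lemma IsSEO.exists_lt_adj (hG : IsSEO G) (hc : G.Connected) {r : Fin n} (hr : IsTop r)
    {z : Fin n} (hz : z ≠ r) : ∃ t, z < t ∧ G.Adj z t := by
  rcases (hG.reflTransGen_lt_adj hc hr z).cases_head with rfl | ⟨t, ⟨hzt, hlt⟩, -⟩
  · exact absurd rfl hz
  · exact ⟨t, hlt, hzt⟩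

lemma IsSEO.exists_parent (hG : IsSEO G) (hc : G.Connected) {r : Fin n} (hr : IsTop r)
    {z : Fin n} (hz : z ≠ r) :
    ∃ p, z < p ∧ G.Adj z p ∧ ∀ w ∈ G.closedNeighborSet z,
      (∃ s ∈ G.closedNeighborSet w, z < s) → p ∈ G.closedNeighborSet w := by
  obtain ⟨t, hzt, ht⟩ := hG.exists_lt_adj hc hr hz
  have hzW : z ∈ {w | w ∈ G.closedNeighborSet z ∧ ∃ s ∈ G.closedNeighborSet w, z < s} :=
    ⟨Or.inl rfl, t, Or.inr ht, hzt⟩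
  obtain ⟨v, ⟨hvz, s, hs, hzs⟩, hmin⟩ := Set.exists_min_image _ id (Set.toFinite _) ⟨z, hzW⟩
  obtain ⟨p, hp, hmax⟩ := Set.exists_max_image (G.closedNeighborSet v) id (Set.toFinite _)
    ⟨v, Or.inl rfl⟩
  have hvz' : v ≤ z := hmin z hzW
  have hzp : z < p := hzs.trans_le (hmax s hs)
  have key : ∀ w ∈ G.closedNeighborSet z, v ≤ w → p ∈ G.closedNeighborSet w := fun w hw hvw =>
    mem_closedNeighborSet_comm.1
      (hG v z p hvz' hzp.le (mem_closedNeighborSet_comm.1 hvz) hp w hvw hw)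
  exact ⟨p, hzp, (key z (Or.inl rfl) hvz').resolve_left hzp.ne',
    fun w hw hws => key w hw (hmin w ⟨hw, hws⟩)⟩

lemma IsSEO.exists_isParentMap (hG : IsSEO G) (hc : G.Connected) {r : Fin n} (hr : IsTop r) :
    ∃ par, IsParentMap G r par := by
  choose! par hlt hadj hmem using fun z (hz : z ≠ r) => hG.exists_parent hc hr hz
  refine ⟨Function.update par r r, Function.update_self .., fun z hz => ?_, fun z hz => ?_,
    fun z hz => ?_⟩ <;> rw [Function.update_of_ne hz]
  exacts [hlt z hz, hadj z hz, hmem z hz]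

lemma IsSEO.exists_isLCST (hG : IsSEO G) (hc : G.Connected)
    (hcut : ∀ v, (G.induce {u | u ≠ v}).Connected) : ∃ T, IsLCST G T := by
  have := hc.nonempty
  obtain ⟨r, hr⟩ := Finite.exists_max (id : Fin n → Fin n)
  obtain ⟨par, hp⟩ := hG.exists_isParentMap hc hr
  exact ⟨parentTree par, hp.isLCST hcut⟩

end StrongEliminationOrder

theorem strongly_chordal_lcst_iff_two_connected_general {n : ℕ}
    (G : SimpleGraph (Fin n))
    (hsc : ∃ e : Fin n ≃ Fin n, IsSEO (SimpleGraph.comap ⇑e G)) :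
    (∃ T, IsLCST G T) ↔
      (G.Connected ∧ ∀ v : Fin n, (G.induce {u | u ≠ v}).Connected) := by
  refine ⟨fun ⟨_, hT⟩ => ⟨hT.connected, hT.connected_induce_ne⟩, fun ⟨hc, hcut⟩ => ?_⟩
  obtain ⟨e, hseo⟩ := hsc
  let φ : G.comap e ≃g G := Iso.comap e G
  obtain ⟨T, hT⟩ := hseo.exists_isLCST (φ.connected_iff.2 hc)
    fun v => (φ.connected_induce_ne_iff v).2 (hcut (e v))
  exact ⟨_, hT.of_iso φ⟩

/-- A strongly chordal graph (a graph admitting a strong elimination order under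
some relabeling of its vertices) with at least 3 vertices has a locally
connected spanning tree if and only if it is 2-connected (connected with no
cut-vertex). -/
theorem strongly_chordal_lcst_iff_two_connected {n : ℕ} (hn : 3 ≤ n)
    (G : SimpleGraph (Fin n))
    (hsc : ∃ e : Fin n ≃ Fin n, IsSEO (SimpleGraph.comap ⇑e G)) :
    (∃ T, IsLCST G T) ↔
      (G.Connected ∧ ∀ v : Fin n, (G.induce {u | u ≠ v}).Connected) :=
  strongly_chordal_lcst_iff_two_connected_general G hsc
end

section
/- Let (v_1, …, v_n) be a strong elimination order of a strongly chordal graph G with |N_{G_i}(v_i)| ≥ 2 for all i ≤ n − 2. For each i ≤ n − 2, define the closest neighbor v_{i*} of v_i as the vertex in N_{G_i}(v_i) minimizing ℓ(v_i, ·) (ties broken by minimum index), where ℓ(v_i, v_j) is the minimum index k with v_k ∈ N_G[v_i] ∩ N_G[v_j]. Then there exist vertices x, y ∈ N_G(v_i) ∪ {v_{i*}} with indices greater than i such that xy is an edge of the tree built by adding edges v_j v_{j*} for j from n−1 down to i+1 (with v_{(n-1)*} = v_n), and one of x, y equals v_{i*} while the other is a neighbor of v_i in G. -/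
/-- Let the identity order on `Fin n` be a strong elimination order of a
strongly chordal graph `G` in which every vertex `v_i` with `i ≤ n − 2`
(1-indexed) has at least two neighbors of larger index.  For adjacent vertices,
`ell i j` is the least index of a common closed neighbor of `v_i` and `v_j`, and
`star i` (for `i ≤ n − 1`, 1-indexed) is the closest neighbor of `v_i`: the
later neighbor of `v_i` minimizing `ell i ·`, ties broken by minimum index.
Then for every `i ≤ n − 2` (1-indexed), the tree `T_{i+1}` consisting of the
edges `v_j (star j)` for `j` from `n − 1` down to `i + 1` (1-indexed) contains
an edge whose endpoints have index greater than `i`, one endpoint being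
`star i` and the other a neighbor of `v_i` in `G`. -/
theorem tree_edge_at_closest_neighbor {n : ℕ} (G : SimpleGraph (Fin n))
    (hseo : IsSEO G)
    (ell : Fin n → Fin n → Fin n)
    (hell : ∀ i j : Fin n, G.Adj i j →
      (ell i j = i ∨ G.Adj i (ell i j)) ∧ (ell i j = j ∨ G.Adj j (ell i j)) ∧
        ∀ m : Fin n, (m = i ∨ G.Adj i m) → (m = j ∨ G.Adj j m) → ell i j ≤ m)
    (star : Fin n → Fin n)
    (hstar : ∀ i : Fin n, (i : ℕ) + 2 ≤ n →
      i < star i ∧ G.Adj i (star i) ∧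
        ∀ j : Fin n, i < j → G.Adj i j →
          (ell i (star i) < ell i j ∨ (ell i (star i) = ell i j ∧ star i ≤ j)))
    (hdeg : ∀ i : Fin n, (i : ℕ) + 3 ≤ n → 2 ≤ {j : Fin n | i < j ∧ G.Adj i j}.ncard)
    (i : Fin n) (hi : (i : ℕ) + 3 ≤ n) :
    ∃ j : Fin n, i < j ∧ (j : ℕ) + 2 ≤ n ∧
      ((star j = star i ∧ G.Adj i j) ∨ (j = star i ∧ G.Adj i (star j))) := by
  classical
  have hi2 : (i : ℕ) + 2 ≤ n := by omega
  obtain ⟨his, hadj_is, hmin⟩ := hstar i hi2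
  set s := star i with hs
  obtain ⟨hl_i, hl_s, hl_min⟩ := hell i s hadj_is
  -- ℓ := ell i s, basic facts
  have hl_le_i : ell i s ≤ i := hl_min i (Or.inl rfl) (Or.inr hadj_is.symm)
  -- K1 : everything in N[i] of index ≥ ℓ lies in N[s]
  have K1 : ∀ w : Fin n, ell i s ≤ w → (w = i ∨ G.Adj i w) → (w = s ∨ G.Adj s w) := by
    intro w hw hwi
    refine hseo (ell i s) i s hl_le_i his.le ?_ ?_ w hw hwi
    · rcases hl_i with h | h
      · exact Or.inl h.symm
      · exact Or.inr h.symm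
    · rcases hl_s with h | h
      · exact Or.inl h.symm
      · exact Or.inr h.symm
  by_cases hA : ∃ y : Fin n, s < y ∧ G.Adj i y
  · -- Case A: i has a neighbor beyond s; then star s is adjacent to i.
    obtain ⟨y, hsy, hadj_iy⟩ := hA
    have hiy : i < y := lt_trans his hsy
    have hadj_sy : G.Adj s y := by
      rcases K1 y (le_trans hl_le_i hiy.le) (Or.inr hadj_iy) with h | h
      · exact absurd h.symm hsy.ne
      · exact h
    have hs2 : (s : ℕ) + 2 ≤ n := by
      have h1 : (s : ℕ) < (y : ℕ) := hsy
      have h2 := y.isLt; omega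
    obtain ⟨hst, hadj_st, hmins⟩ := hstar s hs2
    obtain ⟨hly_i, hly_y, hly_min⟩ := hell i y hadj_iy
    have hly_le_i : ell i y ≤ i := hly_min i (Or.inl rfl) (Or.inr hadj_iy.symm)
    have hl_le_ly : ell i s ≤ ell i y := by
      rcases hmin y hiy hadj_iy with h | ⟨h, _⟩
      · exact h.le
      · exact h.le
    have hly_s : ell i y = s ∨ G.Adj s (ell i y) := K1 _ hl_le_ly hly_i
    obtain ⟨_, _, hsy_min⟩ := hell s y hadj_sy
    have h1 : ell s y ≤ ell i y := hsy_min _ hly_s hly_y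
    have h2 : ell s (star s) ≤ ell s y := by
      rcases hmins y hsy hadj_sy with h | ⟨h, _⟩
      · exact h.le
      · exact h.le
    obtain ⟨hm_s, hm_t, _⟩ := hell s (star s) hadj_st
    have hm_le_i : ell s (star s) ≤ i := le_trans h2 (le_trans h1 hly_le_i)
    have hgoal := hseo (ell s (star s)) s (star s) (le_trans hm_le_i his.le) hst.le
      (hm_s.imp Eq.symm fun h => h.symm) (hm_t.imp Eq.symm fun h => h.symm)
      i hm_le_i (Or.inr hadj_is.symm)
    have hadj_it : G.Adj i (star s) := by
      rcases hgoal with h | h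
      · exact absurd h.symm (ne_of_gt (lt_trans his hst))
      · exact h.symm
    exact ⟨s, his, hs2, Or.inr ⟨rfl, hadj_it⟩⟩
  · -- Case B: all later neighbors of i are ≤ s.
    push_neg at hA
    -- there is a later neighbor of i different from s
    have hfin : {j : Fin n | i < j ∧ G.Adj i j}.Finite := Set.toFinite _
    have h2card : 1 < {j : Fin n | i < j ∧ G.Adj i j}.ncard := lt_of_lt_of_le one_lt_two (hdeg i hi)
    obtain ⟨y0, hy0, hy0s⟩ := Set.exists_ne_of_one_lt_ncard h2card s
    have hexy : ∃ y : Fin n, i < y ∧ y < s ∧ G.Adj i y := by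
      obtain ⟨hic, hadj⟩ := hy0
      exact ⟨y0, hic, lt_of_le_of_ne (not_lt.mp (fun h => hA y0 h hadj)) hy0s, hadj⟩
    -- take Y the maximal neighbor of i strictly between i and s
    set S : Finset (Fin n) := Finset.univ.filter (fun y => i < y ∧ y < s ∧ G.Adj i y) with hS
    have hSne : S.Nonempty := by
      obtain ⟨y, hy⟩ := hexy
      exact ⟨y, by simp [hS, hy.1, hy.2.1, hy.2.2]⟩
    set Y := S.max' hSne with hY
    have hYmem : Y ∈ S := S.max'_mem hSne
    obtain ⟨hiY, hYs, hadj_iY⟩ := (Finset.mem_filter.mp hYmem).2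
    have hY2 : (Y : ℕ) + 2 ≤ n := by
      have h1 : (Y : ℕ) < (s : ℕ) := hYs
      have h2 := s.isLt; omega
    obtain ⟨hYz, hadj_Yz, hminY⟩ := hstar Y hY2
    -- claim : star Y = s
    have hadj_sY : G.Adj s Y := by
      rcases K1 Y (le_trans hl_le_i hiY.le) (Or.inr hadj_iY) with h | h
      · exact absurd h hYs.ne
      · exact h
    obtain ⟨hlY_i, hlY_Y, hlY_min⟩ := hell i Y hadj_iY
    have hlY_le_i : ell i Y ≤ i := hlY_min i (Or.inl rfl) (Or.inr hadj_iY.symm)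
    have hl_le_lY : ell i s ≤ ell i Y := by
      rcases hmin Y hiY hadj_iY with h | ⟨h, _⟩
      · exact h.le
      · exact h.le
    have hlY_s : ell i Y = s ∨ G.Adj s (ell i Y) := K1 _ hl_le_lY hlY_i
    obtain ⟨_, _, hYs_min⟩ := hell Y s hadj_sY.symm
    have h1 : ell Y s ≤ ell i Y := hYs_min _ hlY_Y hlY_s
    have h2 : ell Y (star Y) ≤ ell Y s := by
      rcases hminY s hYs hadj_sY.symm with h | ⟨h, _⟩
      · exact h.le
      · exact h.le
    obtain ⟨hm_Y, hm_z, _⟩ := hell Y (star Y) hadj_Yz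
    have hm_le_i : ell Y (star Y) ≤ i := le_trans h2 (le_trans h1 hlY_le_i)
    have hgoal := hseo (ell Y (star Y)) Y (star Y) (le_trans hm_le_i hiY.le) hYz.le
      (hm_Y.imp Eq.symm fun h => h.symm) (hm_z.imp Eq.symm fun h => h.symm)
      i hm_le_i (Or.inr hadj_iY.symm)
    have hadj_iz : G.Adj i (star Y) := by
      rcases hgoal with h | h
      · exact absurd h.symm (ne_of_gt (lt_trans hiY hYz))
      · exact h.symm
    have hzs : star Y = s := by
      by_contra hzs
      have hzlt : star Y < s :=
        lt_of_le_of_ne (not_lt.mp (fun h => hA (star Y) h hadj_iz)) hzs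
      have hzS : star Y ∈ S := by
        simp [hS, lt_trans hiY hYz, hzlt, hadj_iz]
      exact absurd (S.le_max' _ hzS) (not_le.mpr hYz)
    exact ⟨Y, hiY, hY2, Or.inl ⟨hzs, hadj_iY⟩⟩
end

section
/- If a circular-arc graph G has an intersection model F in which at least four arcs have density at most 2, then G has no locally connected spanning tree. -/
/-- The circle is modeled by the `m` cyclically ordered points of `Fin m`.
An arc `a = (h, t)` runs counterclockwise from its head `h` to its tail `t`;
it contains the point `x` iff `x` is encountered no later than `t` when
traversing counterclockwise from `h` (measured by cyclic subtraction). -/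
def arcContains {m : ℕ} (a : Fin m × Fin m) (x : Fin m) : Prop :=
  x - a.1 ≤ a.2 - a.1

/-
Two distinct points `P`, `Q` split the circle into the half-open ranges `[P, Q)` and `[Q, P)`.
If every arc through `P` or `Q`, except those of two vertices `a`, `b`, starts there, then each
of the other arcs lies on one side, so `G - a - b` is disconnected. When `a` and `b` are
non-adjacent this cannot happen in a graph with a locally connected spanning tree `T`: the
components of `T - a - b` are joined through the `T`-neighbourhoods of `a` and `b`, which are
connected in `G`.

Such a cut exists whenever four heads `P₁ P₂ P₃ P₄` (in counterclockwise order) have density at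
most 2. An arc through two of the heads other than their own arcs gives a cut at those heads
with `a = b` that arc. Two heads lying on no arc but their own disconnect `G` outright.
Otherwise at least three heads, hence two opposite ones, say `P₁` and `P₃`, each lie on one
further arc; these two arcs stay in the disjoint ranges `[P₄, P₂)` and `[P₂, P₄)`, so they are
non-adjacent and cut the circle at `P₁` and `P₃`.
-/

theorem SimpleGraph.Reachable.iff_of_forall_adj {V : Type*} {G : SimpleGraph V} {p : V → Prop}
    (hp : ∀ x y, G.Adj x y → (p x ↔ p y)) {u v : V} (h : G.Reachable u v) : p u ↔ p v := by
  obtain ⟨w⟩ := h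
  induction w with
  | nil => rfl
  | cons ha _ ih => exact (hp _ _ ha).trans ih

/-- `G - a - b` is connected, phrased through predicates invariant along its edges. -/
theorem IsLCST.iff_of_forall_adj {V : Type*} {G T : SimpleGraph V} (hT : IsLCST G T)
    {a b : V} (hab : ¬ G.Adj a b) {p : V → Prop}
    (hp : ∀ x y, x ≠ a → x ≠ b → y ≠ a → y ≠ b → G.Adj x y → (p x ↔ p y))
    {u v : V} (hua : u ≠ a) (hub : u ≠ b) (hva : v ≠ a) (hvb : v ≠ b) : p u ↔ p v := by
  classical
  obtain ⟨hTG, hconn, -, hloc⟩ := hT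
  have hoff : ∀ c, (c = a ∨ c = b) → ∀ z, T.Adj c z → z ≠ a ∧ z ≠ b := by
    rintro c (rfl | rfl) z hz <;> refine ⟨?_, ?_⟩ <;> rintro rfl
    exacts [G.irrefl (hTG hz), hab (hTG hz), hab (hTG hz).symm, G.irrefl (hTG hz)]
  have hnbr : ∀ c, (c = a ∨ c = b) → ∀ x y, T.Adj c x → T.Adj c y → (p x ↔ p y) := by
    intro c hc x y hx hy
    refine SimpleGraph.Reachable.iff_of_forall_adj (p := fun z : T.neighborSet c => p z)
      (fun z z' hzz' => ?_) ((hloc c).preconnected ⟨x, hx⟩ ⟨y, hy⟩)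
    exact hp z z' (hoff c hc z z.2).1 (hoff c hc z z.2).2 (hoff c hc z' z'.2).1
      (hoff c hc z' z'.2).2 hzz'
  -- at `a` and `b`, read `p` off their `T`-neighbours
  let q : V → Prop := fun v => if v = a ∨ v = b then ∃ z, T.Adj v z ∧ p z else p v
  have hq_off : ∀ v, v ≠ a → v ≠ b → (q v ↔ p v) := fun v ha hb => by
    simp only [q, ha, hb, or_self, if_false]
  have hq_on : ∀ c x, (c = a ∨ c = b) → T.Adj c x → (q c ↔ p x) := fun c x hc hcx => by
    simp only [q, hc, if_true]
    exact ⟨fun ⟨z, hz, hpz⟩ => (hnbr c hc x z hcx hz).2 hpz, fun hpx => ⟨x, hcx, hpx⟩⟩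
  have hq : ∀ x y, T.Adj x y → (q x ↔ q y) := by
    intro x y hxy
    by_cases hx : x = a ∨ x = b <;> by_cases hy : y = a ∨ y = b
    · have := hoff x hx y hxy
      tauto
    · rw [hq_on x y hx hxy, hq_off y (not_or.1 hy).1 (not_or.1 hy).2]
    · rw [hq_on y x hy hxy.symm, hq_off x (not_or.1 hx).1 (not_or.1 hx).2]
    · rw [not_or] at hx hy
      rw [hq_off x hx.1 hx.2, hq_off y hy.1 hy.2]
      exact hp x y hx.1 hx.2 hy.1 hy.2 (hTG hxy)
  rw [← hq_off u hua hub, ← hq_off v hva hvb]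
  exact SimpleGraph.Reachable.iff_of_forall_adj hq (hconn.preconnected u v)

namespace CircularArc

variable {m : ℕ}

def arc (a : Fin m × Fin m) : Set (Fin m) := {x | arcContains a x}

/-- The counterclockwise half-open range `[c, d)`; empty if `c = d`. -/
def cIco (c d : Fin m) : Set (Fin m) := {x | (x - c).val < (d - c).val}

def CcwOrdered (p q r s : Fin m) : Prop :=
  0 < (q - p).val ∧ (q - p).val < (r - p).val ∧ (r - p).val < (s - p).val

theorem val_sub_eq_ite (a b : Fin m) :
    (a - b).val = if b.val ≤ a.val then a.val - b.val else m + a.val - b.val := by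
  split_ifs with h
  · exact Fin.sub_val_of_le h
  · exact Fin.coe_sub_iff_lt.2 (not_le.1 h)

theorem head_mem_arc (a : Fin m × Fin m) : a.1 ∈ arc a := by
  simp only [arc, arcContains, Set.mem_ofPred_eq, Fin.le_def, val_sub_eq_ite]
  split_ifs <;> omega

theorem left_mem_cIco {c d : Fin m} (h : c ≠ d) : c ∈ cIco c d := by
  have := Fin.val_ne_of_ne h
  simp only [cIco, Set.mem_ofPred_eq, val_sub_eq_ite]
  split_ifs <;> omega

theorem right_notMem_cIco (c d : Fin m) : d ∉ cIco c d :=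
  lt_irrefl (d - c).val

theorem mem_cIco_or_mem_cIco {c d : Fin m} (h : c ≠ d) (x : Fin m) :
    x ∈ cIco c d ∨ x ∈ cIco d c := by
  have := Fin.val_ne_of_ne h
  have := x.isLt
  simp only [cIco, Set.mem_ofPred_eq, val_sub_eq_ite]
  split_ifs <;> omega

theorem disjoint_cIco (c d : Fin m) : Disjoint (cIco c d) (cIco d c) := by
  refine Set.disjoint_left.2 fun x h₁ h₂ => ?_
  have := x.isLt; have := c.isLt; have := d.isLt
  simp only [cIco, Set.mem_ofPred_eq, val_sub_eq_ite] at h₁ h₂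
  split_ifs at h₁ h₂ <;> omega

theorem arc_subset_cIco {a : Fin m × Fin m} {c d : Fin m} (hh : a.1 ∈ cIco c d)
    (hd : d ∉ arc a) : arc a ⊆ cIco c d := by
  intro x hx
  have := x.isLt; have := c.isLt; have := d.isLt; have := a.1.isLt; have := a.2.isLt
  simp only [arc, cIco, arcContains, Set.mem_ofPred_eq, Fin.le_def, val_sub_eq_ite] at *
  split_ifs at * <;> omega

theorem mem_arc_of_mem_cIco {a : Fin m × Fin m} {x y : Fin m} (hx : x ∈ arc a)
    (hy : y ∈ cIco a.1 x) : y ∈ arc a :=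
  Fin.le_def.2 (le_trans (le_of_lt hy) hx)

theorem arc_subset_cIco_or {a : Fin m × Fin m} {P Q : Fin m} (hPQ : P ≠ Q)
    (hP : P ∈ arc a → a.1 = P) (hQ : Q ∈ arc a → a.1 = Q) :
    arc a ⊆ cIco P Q ∨ arc a ⊆ cIco Q P := by
  by_cases hPa : P ∈ arc a
  · have hQa : Q ∉ arc a := fun hQa => hPQ ((hP hPa).symm.trans (hQ hQa))
    exact .inl (arc_subset_cIco (by rw [hP hPa]; exact left_mem_cIco hPQ) hQa)
  by_cases hQa : Q ∈ arc a
  · exact .inr (arc_subset_cIco (by rw [hQ hQa]; exact left_mem_cIco hPQ.symm) hPa)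
  rcases mem_cIco_or_mem_cIco hPQ a.1 with h | h
  exacts [.inl (arc_subset_cIco h hQa), .inr (arc_subset_cIco h hPa)]

theorem subset_cIco_iff_head_mem {a : Fin m × Fin m} {P Q : Fin m}
    (ha : arc a ⊆ cIco P Q ∨ arc a ⊆ cIco Q P) : arc a ⊆ cIco P Q ↔ a.1 ∈ cIco P Q := by
  refine ⟨fun h => h (head_mem_arc a), fun h => ha.resolve_right fun h' => ?_⟩
  exact Set.disjoint_left.1 (disjoint_cIco P Q) h (h' (head_mem_arc a))

namespace CcwOrdered

variable {p q r s : Fin m}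

theorem rotate (h : CcwOrdered p q r s) : CcwOrdered q r s p := by
  have := p.isLt; have := q.isLt; have := r.isLt; have := s.isLt
  simp only [CcwOrdered, val_sub_eq_ite] at *
  split_ifs at * <;> omega

theorem ne₁₂ (h : CcwOrdered p q r s) : p ≠ q := by
  rintro rfl
  simp only [CcwOrdered, val_sub_eq_ite] at h
  split_ifs at h <;> omega

theorem ne₁₃ (h : CcwOrdered p q r s) : p ≠ r := by
  rintro rfl
  simp only [CcwOrdered, val_sub_eq_ite] at h
  split_ifs at h <;> omega

theorem mem_cIco (h : CcwOrdered p q r s) : r ∈ cIco q p := by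
  have := p.isLt; have := q.isLt; have := r.isLt; have := s.isLt
  simp only [CcwOrdered, cIco, Set.mem_ofPred_eq, val_sub_eq_ite] at *
  split_ifs at * <;> omega

theorem notMem_cIco (h : CcwOrdered p q r s) : p ∉ cIco q s := by
  have := p.isLt; have := q.isLt; have := r.isLt; have := s.isLt
  simp only [CcwOrdered, cIco, Set.mem_ofPred_eq, val_sub_eq_ite, not_lt] at *
  split_ifs at * <;> omega

end CcwOrdered

variable {V : Type*}

def intersectionGraph (F : V → Fin m × Fin m) : SimpleGraph V where
  Adj u v := u ≠ v ∧ (arc (F u) ∩ arc (F v)).Nonempty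
  symm := ⟨fun _ _ h => ⟨h.1.symm, Set.inter_comm (arc _) (arc _) ▸ h.2⟩⟩
  loopless := ⟨fun _ h => h.1 rfl⟩

/-- The density `d(v)` of the arc of `v` is `density F (F v).1`. -/
noncomputable def density (F : V → Fin m × Fin m) (x : Fin m) : ℕ := {v | x ∈ arc (F v)}.ncard

variable {G T : SimpleGraph V} {F : V → Fin m × Fin m}

theorem eq_or_eq_of_density_le_two [Finite V] {x : Fin m} (hx : density F x ≤ 2) {u w v : V}
    (huw : u ≠ w) (hu : x ∈ arc (F u)) (hw : x ∈ arc (F w)) (hv : x ∈ arc (F v)) :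
    v = u ∨ v = w := by
  have hsub : ({u, w} : Set V) ⊆ {v | x ∈ arc (F v)} := by
    rintro _ (rfl | rfl)
    exacts [hu, hw]
  have := Set.eq_of_subset_of_ncard_le hsub (hx.trans (Set.ncard_pair huw).ge)
  have hv' : v ∈ {v | x ∈ arc (F v)} := hv
  rwa [← this] at hv'

theorem subset_cIco_iff_of_adj (hGF : G ≤ intersectionGraph F) {P Q : Fin m} {x y : V}
    (hx : arc (F x) ⊆ cIco P Q ∨ arc (F x) ⊆ cIco Q P)
    (hy : arc (F y) ⊆ cIco P Q ∨ arc (F y) ⊆ cIco Q P) (hxy : G.Adj x y) :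
    arc (F x) ⊆ cIco P Q ↔ arc (F y) ⊆ cIco P Q := by
  obtain ⟨-, z, hzx, hzy⟩ : (intersectionGraph F).Adj x y := hGF hxy
  have hd := Set.disjoint_left.1 (disjoint_cIco P Q)
  refine ⟨fun h => hy.resolve_right fun h' => hd (h hzx) (h' hzy),
    fun h => hx.resolve_right fun h' => hd (h hzy) (h' hzx)⟩

theorem not_connected_of_unique_mem_arc (hGF : G ≤ intersectionGraph F) {u w : V}
    (hhead : (F u).1 ≠ (F w).1) (hu : ∀ v, (F u).1 ∈ arc (F v) → v = u)
    (hw : ∀ v, (F w).1 ∈ arc (F v) → v = w) : ¬ G.Connected := by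
  intro hconn
  have hside : ∀ v, arc (F v) ⊆ cIco (F u).1 (F w).1 ∨ arc (F v) ⊆ cIco (F w).1 (F u).1 :=
    fun v => arc_subset_cIco_or hhead (fun h => by rw [hu v h]) (fun h => by rw [hw v h])
  have := SimpleGraph.Reachable.iff_of_forall_adj
    (fun x y hxy => subset_cIco_iff_of_adj hGF (hside x) (hside y) hxy) (hconn.preconnected u w)
  rw [subset_cIco_iff_head_mem (hside u), subset_cIco_iff_head_mem (hside w)] at this
  exact right_notMem_cIco _ _ (this.1 (left_mem_cIco hhead))

theorem not_isLCST_of_unique_mem_arc (hGF : G ≤ intersectionGraph F) {a b u w : V}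
    (hab : ¬ G.Adj a b) (hua : u ≠ a) (hub : u ≠ b) (hwa : w ≠ a) (hwb : w ≠ b)
    (hhead : (F u).1 ≠ (F w).1) (hu : ∀ v, v ≠ a → v ≠ b → (F u).1 ∈ arc (F v) → v = u)
    (hw : ∀ v, v ≠ a → v ≠ b → (F w).1 ∈ arc (F v) → v = w) : ¬ IsLCST G T := by
  intro hT
  have hside : ∀ v, v ≠ a → v ≠ b →
      arc (F v) ⊆ cIco (F u).1 (F w).1 ∨ arc (F v) ⊆ cIco (F w).1 (F u).1 := fun v hva hvb =>
    arc_subset_cIco_or hhead (fun h => by rw [hu v hva hvb h]) (fun h => by rw [hw v hva hvb h])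
  have := hT.iff_of_forall_adj hab (fun x y hxa hxb hya hyb hxy =>
    subset_cIco_iff_of_adj hGF (hside x hxa hxb) (hside y hya hyb) hxy) hua hub hwa hwb
  rw [subset_cIco_iff_head_mem (hside u hua hub), subset_cIco_iff_head_mem (hside w hwa hwb)]
    at this
  exact right_notMem_cIco _ _ (this.1 (left_mem_cIco hhead))

theorem eq_or_eq_of_heads_mem_arc [Finite V] (hGF : G ≤ intersectionGraph F) (hT : IsLCST G T)
    {u w s : V} (hu : density F (F u).1 ≤ 2) (hw : density F (F w).1 ≤ 2)
    (huw : (F u).1 ≠ (F w).1) (hsu : (F u).1 ∈ arc (F s)) (hsw : (F w).1 ∈ arc (F s)) :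
    s = u ∨ s = w := by
  by_contra! h
  refine not_isLCST_of_unique_mem_arc hGF (G.irrefl (v := s)) h.1.symm h.1.symm h.2.symm
    h.2.symm huw (fun v hvs _ hv => ?_) (fun v hvs _ hv => ?_) hT
  · exact (eq_or_eq_of_density_le_two hu h.1.symm (head_mem_arc _) hsu hv).resolve_right hvs
  · exact (eq_or_eq_of_density_le_two hw h.2.symm (head_mem_arc _) hsw hv).resolve_right hvs

theorem arc_subset_cIco_of_head_mem_arc {U₁ U₂ U₃ U₄ g : V}
    (hord : CcwOrdered (F U₁).1 (F U₂).1 (F U₃).1 (F U₄).1)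
    (h₁₂ : ∀ v, (F U₁).1 ∈ arc (F v) → (F U₂).1 ∈ arc (F v) → v = U₁ ∨ v = U₂)
    (h₁₃ : ∀ v, (F U₁).1 ∈ arc (F v) → (F U₃).1 ∈ arc (F v) → v = U₁ ∨ v = U₃)
    (h₁₄ : ∀ v, (F U₁).1 ∈ arc (F v) → (F U₄).1 ∈ arc (F v) → v = U₁ ∨ v = U₄)
    (hg : g ≠ U₁) (hg₁ : (F U₁).1 ∈ arc (F g)) : arc (F g) ⊆ cIco (F U₄).1 (F U₂).1 := by
  have hU₂ : (F U₁).1 ∉ arc (F U₂) := by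
    -- from its head it would run past the head of `U₃` to that of `U₁`
    intro h
    rcases h₁₃ U₂ h (mem_arc_of_mem_cIco h hord.mem_cIco) with h' | h'
    · exact hord.ne₁₂ (by rw [h'])
    · exact hord.rotate.ne₁₂ (by rw [h'])
  have hg₂ : (F U₂).1 ∉ arc (F g) := fun h => hU₂ ((h₁₂ g hg₁ h).resolve_left hg ▸ hg₁)
  by_cases hg₄ : (F U₄).1 ∈ arc (F g)
  · obtain rfl := (h₁₄ g hg₁ hg₄).resolve_left hg
    exact arc_subset_cIco (left_mem_cIco hord.rotate.ne₁₃.symm) hg₂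
  · rcases mem_cIco_or_mem_cIco hord.rotate.ne₁₃ (F g).1 with h | h
    · exact absurd (arc_subset_cIco h hg₄ hg₁) hord.notMem_cIco
    · exact arc_subset_cIco h hg₂

theorem not_isLCST_of_opposite_heads_covered [Finite V] (hGF : G ≤ intersectionGraph F)
    {U₁ U₂ U₃ U₄ : V} (hord : CcwOrdered (F U₁).1 (F U₂).1 (F U₃).1 (F U₄).1)
    (h₁ : density F (F U₁).1 ≤ 2) (h₂ : density F (F U₂).1 ≤ 2)
    (h₃ : density F (F U₃).1 ≤ 2) (h₄ : density F (F U₄).1 ≤ 2)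
    (hg₁ : ∃ g ≠ U₁, (F U₁).1 ∈ arc (F g)) (hg₃ : ∃ g ≠ U₃, (F U₃).1 ∈ arc (F g)) :
    ¬ IsLCST G T := by
  intro hT
  obtain ⟨g₁, hg₁U, hg₁⟩ := hg₁
  obtain ⟨g₃, hg₃U, hg₃⟩ := hg₃
  have hord₃ := hord.rotate.rotate
  have hX₁ : arc (F g₁) ⊆ cIco (F U₄).1 (F U₂).1 := arc_subset_cIco_of_head_mem_arc hord
    (fun _ => eq_or_eq_of_heads_mem_arc hGF hT h₁ h₂ hord.ne₁₂)
    (fun _ => eq_or_eq_of_heads_mem_arc hGF hT h₁ h₃ hord.ne₁₃)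
    (fun _ => eq_or_eq_of_heads_mem_arc hGF hT h₁ h₄ hord₃.rotate.ne₁₂.symm) hg₁U hg₁
  have hX₃ : arc (F g₃) ⊆ cIco (F U₂).1 (F U₄).1 := arc_subset_cIco_of_head_mem_arc hord₃
    (fun _ => eq_or_eq_of_heads_mem_arc hGF hT h₃ h₄ hord₃.ne₁₂)
    (fun _ => eq_or_eq_of_heads_mem_arc hGF hT h₃ h₁ hord₃.ne₁₃)
    (fun _ => eq_or_eq_of_heads_mem_arc hGF hT h₃ h₂ hord.rotate.ne₁₂.symm) hg₃U hg₃
  have hnadj : ¬ G.Adj g₁ g₃ := fun h => by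
    obtain ⟨-, x, hx₁, hx₃⟩ : (intersectionGraph F).Adj g₁ g₃ := hGF h
    exact Set.disjoint_left.1 (disjoint_cIco _ _) (hX₁ hx₁) (hX₃ hx₃)
  have hU₃ : U₃ ≠ g₁ := fun h => hord₃.notMem_cIco (hX₁ (by rw [← h]; exact head_mem_arc _))
  have hU₁ : U₁ ≠ g₃ := fun h => hord.notMem_cIco (hX₃ (by rw [← h]; exact head_mem_arc _))
  refine not_isLCST_of_unique_mem_arc hGF hnadj hg₁U.symm hU₁ hU₃ hg₃U.symm hord.ne₁₃
    (fun v hv₁ _ hv => ?_) (fun v _ hv₃ hv => ?_) hT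
  · exact (eq_or_eq_of_density_le_two h₁ hg₁U.symm (head_mem_arc _) hg₁ hv).resolve_right hv₁
  · exact (eq_or_eq_of_density_le_two h₃ hg₃U.symm (head_mem_arc _) hg₃ hv).resolve_right hv₃

theorem exists_ccwOrdered {S : Set V} (hS : 4 ≤ S.ncard) {f : V → Fin m} (hf : S.InjOn f) :
    ∃ u₁ ∈ S, ∃ u₂ ∈ S, ∃ u₃ ∈ S, ∃ u₄ ∈ S, CcwOrdered (f u₁) (f u₂) (f u₃) (f u₄) := by
  obtain ⟨a, ha, b, hb, c, hc, d, hd, hab, hac, had, hbc, hbd, hcd⟩ :=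
    (Set.three_lt_ncard (Set.finite_of_ncard_pos (by omega))).1 hS
  have : NeZero m := ⟨(f a).pos.ne'⟩
  let key : V → ℕ := fun x => (f x - f a).val
  have hkey : ∀ x ∈ S, ∀ y ∈ S, x ≠ y → key x ≠ key y := fun x hx y hy hxy h =>
    hxy (hf hx hy (sub_left_injective (Fin.ext h)))
  have hsorted : ∀ x ∈ S, ∀ y ∈ S, ∀ z ∈ S, x ≠ a → key x < key y → key y < key z →
      ∃ u₁ ∈ S, ∃ u₂ ∈ S, ∃ u₃ ∈ S, ∃ u₄ ∈ S, CcwOrdered (f u₁) (f u₂) (f u₃) (f u₄) :=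
    fun x hx y hy z hz hxa hxy hyz => ⟨a, ha, x, hx, y, hy, z, hz,
      Nat.pos_of_ne_zero fun h => hkey x hx a ha hxa (by simp [key, h]), hxy, hyz⟩
  rcases (hkey b hb c hc hbc).lt_or_gt with h₁ | h₁ <;>
    rcases (hkey b hb d hd hbd).lt_or_gt with h₂ | h₂ <;>
    rcases (hkey c hc d hd hcd).lt_or_gt with h₃ | h₃
  exacts [hsorted b hb c hc d hd hab.symm h₁ h₃, hsorted b hb d hd c hc hab.symm h₂ h₃,
    by omega, hsorted d hd b hb c hc had.symm h₂ h₁, hsorted c hc b hb d hd hac.symm h₁ h₂,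
    by omega, hsorted c hc d hd b hb hac.symm h₃ h₂, hsorted d hd c hc b hb had.symm h₃ h₁]

end CircularArc

open CircularArc

theorem no_lcst_of_four_low_density_arcs_general {V : Type*} [Fintype V] {m : ℕ}
    (G : SimpleGraph V) (F : V → Fin m × Fin m)
    (hdist : ∀ u v : V, (F u).1 ≠ (F v).2 ∧
      (u ≠ v → (F u).1 ≠ (F v).1 ∧ (F u).2 ≠ (F v).2))
    (hG : ∀ u v : V, G.Adj u v ↔
      u ≠ v ∧ ∃ x : Fin m, arcContains (F u) x ∧ arcContains (F v) x)
    (h4 : 4 ≤ {v : V | {u : V | arcContains (F u) (F v).1}.ncard ≤ 2}.ncard) :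
    ¬ ∃ T, IsLCST G T := by
  rintro ⟨T, hT⟩
  have hGF : G ≤ intersectionGraph F := fun u v h => (hG u v).1 h
  have hinj : Function.Injective fun v => (F v).1 := fun u v h =>
    by_contra fun hne => ((hdist u v).2 hne).1 h
  obtain ⟨U₁, h₁, U₂, h₂, U₃, h₃, U₄, h₄, hord⟩ := exists_ccwOrdered h4 hinj.injOn
  by_cases hg₁₃ : (∃ g ≠ U₁, (F U₁).1 ∈ arc (F g)) ∧ ∃ g ≠ U₃, (F U₃).1 ∈ arc (F g)
  · exact not_isLCST_of_opposite_heads_covered hGF hord h₁ h₂ h₃ h₄ hg₁₃.1 hg₁₃.2 hT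
  by_cases hg₂₄ : (∃ g ≠ U₂, (F U₂).1 ∈ arc (F g)) ∧ ∃ g ≠ U₄, (F U₄).1 ∈ arc (F g)
  · exact not_isLCST_of_opposite_heads_covered hGF hord.rotate h₂ h₃ h₄ h₁ hg₂₄.1 hg₂₄.2 hT
  have huniq : ∀ {u}, ¬ (∃ g ≠ u, (F u).1 ∈ arc (F g)) → ∀ v, (F u).1 ∈ arc (F v) → v = u :=
    fun h v hv => by_contra fun hne => h ⟨v, hne, hv⟩
  rcases not_and_or.1 hg₁₃ with hu | hu <;> rcases not_and_or.1 hg₂₄ with hw | hw <;>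
    refine not_connected_of_unique_mem_arc hGF ?_ (huniq hu) (huniq hw) (hT.2.1.mono hT.1)
  exacts [hord.ne₁₂, hord.rotate.rotate.rotate.ne₁₂.symm, hord.rotate.ne₁₂.symm,
    hord.rotate.rotate.ne₁₂]

/-- If a circular-arc graph `G` has an intersection model `F` (all endpoints
distinct, no arc covering the whole circle, adjacency = overlapping arcs) in
which at least four arcs have density at most 2 (the density of `a(v)` being
the number of arcs containing the head of `a(v)`), then `G` has no locally
connected spanning tree. -/
theorem no_lcst_of_four_low_density_arcs {V : Type*} [Fintype V] {m : ℕ}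
    (G : SimpleGraph V) (F : V → Fin m × Fin m)
    (hdist : ∀ u v : V, (F u).1 ≠ (F v).2 ∧
      (u ≠ v → (F u).1 ≠ (F v).1 ∧ (F u).2 ≠ (F v).2))
    (hfull : ∀ v : V, ∃ x : Fin m, ¬ arcContains (F v) x)
    (hG : ∀ u v : V, G.Adj u v ↔
      u ≠ v ∧ ∃ x : Fin m, arcContains (F u) x ∧ arcContains (F v) x)
    (h4 : 4 ≤ {v : V | {u : V | arcContains (F u) (F v).1}.ncard ≤ 2}.ncard) :
    ¬ ∃ T, IsLCST G T :=
  no_lcst_of_four_low_density_arcs_general G F hdist hG h4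
end

section
/- Let G be a graph containing three vertices a, b, c such that each of the pairs {a,b}, {a,c}, {b,c} is a separating set of G. If T is a locally connected spanning tree of G, then all three edges ab, ac, bc lie in T, which is impossible since T is acyclic. Hence G has no locally connected spanning tree. -/
open SimpleGraph


lemma reach_mono (G : SimpleGraph V) {A B : Set V} (h : A ⊆ B) {u v : A}
    (hr : (G.induce A).Reachable u v) :
    (G.induce B).Reachable ⟨u, h u.2⟩ ⟨v, h v.2⟩ :=
  hr.map ⟨Set.inclusion h, fun ha => ha⟩

lemma key (G T : SimpleGraph V) (hle : T ≤ G)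
    (hloc : ∀ v : V, (G.induce (T.neighborSet v)).Connected)
    (x y : V) (hxy : ¬ T.Adj x y) :
    ∀ n {u v : V} (p : T.Walk u v), p.length = n →
      ∀ (hu : u ∈ ({x, y} : Set V)ᶜ) (hv : v ∈ ({x, y} : Set V)ᶜ),
      (G.induce (({x, y} : Set V)ᶜ)).Reachable ⟨u, hu⟩ ⟨v, hv⟩ := by
  intro n
  induction n using Nat.strong_induction_on with
  | _ n ih =>
    intro u v p hl hu hv
    cases p with
    | nil => exact Reachable.refl _
    | @cons _ w _ h q =>
      by_cases hw : w ∈ ({x, y} : Set V)ᶜ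
      · have step : (G.induce (({x, y} : Set V)ᶜ)).Adj ⟨u, hu⟩ ⟨w, hw⟩ := hle h
        exact step.reachable.trans
          (ih q.length (by simp at hl; omega) q rfl hw hv)
      · -- w = x or w = y
        have hwmem : w = x ∨ w = y := by
          by_contra hc; push_neg at hc; exact hw (by simp [Set.mem_compl_iff, hc.1, hc.2])
        cases q with
        | nil => exact absurd hwmem (by simpa [Set.mem_compl_iff] using hv)
        | @cons _ z _ h2 r =>
          have hz : z ∈ ({x, y} : Set V)ᶜ := by
            rcases hwmem with rfl | rfl
            · simp only [Set.mem_compl_iff, Set.mem_insert_iff, Set.mem_singleton_iff]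
              push_neg
              exact ⟨fun hzx => T.irrefl (hzx ▸ h2), fun hzy => hxy (hzy ▸ h2)⟩
            · simp only [Set.mem_compl_iff, Set.mem_insert_iff, Set.mem_singleton_iff]
              push_neg
              exact ⟨fun hzx => hxy (hzx ▸ h2).symm, fun hzy => T.irrefl (hzy ▸ h2)⟩
          have hsub : T.neighborSet w ⊆ ({x, y} : Set V)ᶜ := by
            intro t ht
            rcases hwmem with rfl | rfl
            · simp only [Set.mem_compl_iff, Set.mem_insert_iff, Set.mem_singleton_iff]
              push_neg
              exact ⟨fun htx => T.irrefl (htx ▸ ht), fun hty => hxy (hty ▸ ht)⟩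
            · simp only [Set.mem_compl_iff, Set.mem_insert_iff, Set.mem_singleton_iff]
              push_neg
              exact ⟨fun htx => hxy (htx ▸ ht).symm, fun hty => T.irrefl (hty ▸ ht)⟩
          have hun : u ∈ T.neighborSet w := h.symm
          have hzn : z ∈ T.neighborSet w := h2
          have detour := (hloc w).preconnected ⟨u, hun⟩ ⟨z, hzn⟩
          have detour' := reach_mono G hsub detour
          exact detour'.trans (ih r.length (by simp at hl; omega) r rfl hz hv)

lemma sep_edge (G T : SimpleGraph V) (hT : IsLCST G T) (x y : V)
    (hsep : ¬ (G.induce (({x, y} : Set V)ᶜ)).Preconnected) : T.Adj x y := by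
  obtain ⟨hle, hconn, hac, hloc⟩ := hT
  by_contra hxy
  apply hsep
  intro u v
  obtain ⟨p⟩ := hconn.preconnected u.1 v.1
  have := key G T hle hloc x y hxy p.length p rfl u.2 v.2
  simpa using this

/-- Let `G` contain three vertices `a`, `b`, `c` such that each of the pairs
`{a,b}`, `{a,c}`, `{b,c}` is a separating set of `G`.  Then any locally
connected spanning tree `T` would have to contain all three edges `ab`, `ac`,
`bc`, which is impossible since `T` is acyclic; hence `G` has no locally
connected spanning tree. -/
theorem no_lcst_of_three_pairwise_separating_pairs {V : Type*} [Fintype V]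
    (G : SimpleGraph V) (a b c : V) (hab : a ≠ b) (hac : a ≠ c) (hbc : b ≠ c)
    (h1 : ¬ (G.induce (({a, b} : Set V)ᶜ)).Preconnected)
    (h2 : ¬ (G.induce (({a, c} : Set V)ᶜ)).Preconnected)
    (h3 : ¬ (G.induce (({b, c} : Set V)ᶜ)).Preconnected) :
    (∀ T : SimpleGraph V, IsLCST G T → T.Adj a b ∧ T.Adj a c ∧ T.Adj b c) ∧
      ¬ ∃ T, IsLCST G T := by
  have hall : ∀ T : SimpleGraph V, IsLCST G T → T.Adj a b ∧ T.Adj a c ∧ T.Adj b c :=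
    fun T hT => ⟨sep_edge G T hT a b h1, sep_edge G T hT a c h2, sep_edge G T hT b c h3⟩
  refine ⟨hall, ?_⟩
  rintro ⟨T, hT⟩
  obtain ⟨e1, e2, e3⟩ := hall T hT
  refine hT.2.2.1 (Walk.cons e1 (Walk.cons e3 (Walk.cons e2.symm Walk.nil))) ?_
  simp [Walk.isCycle_def, Walk.isTrail_def, hab, hac, hbc, hab.symm, hac.symm, hbc.symm,
    Sym2.eq_iff]
end

section
/- Let G be a 2-connected graph with a locally connected spanning tree T, let {x, y} be a separating set of G, and let H be a component of G − {x, y}. If some vertex of H is joined in T to x, then the edge xy belongs to T and x and y have a common neighbor in H. -/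
private lemma reach_induce_mono {V : Type*} {G : SimpleGraph V} {A B : Set V} (hAB : A ⊆ B)
    {a b : ↥A} (h : (G.induce A).Reachable a b) :
    (G.induce B).Reachable ⟨↑a, hAB a.2⟩ ⟨↑b, hAB b.2⟩ := by
  obtain ⟨p⟩ := h
  induction p with
  | nil => exact SimpleGraph.Reachable.refl _
  | cons h p ih =>
      refine SimpleGraph.Reachable.trans ?_ ih
      exact SimpleGraph.Adj.reachable (by simpa using h)

/-- Let `G` be 2-connected with a locally connected spanning tree `T`, let
`{x, y}` be a separating set of `G`, and let `H` be a connected component of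
`G − {x, y}` (given by its component class `C`).  If some vertex of `H` is
joined in `T` to `x`, then the edge `xy` belongs to `T` and `x` and `y` have a
common neighbor in `H`. -/
theorem tree_edge_and_common_neighbor_of_component_join {V : Type*} [Fintype V]
    (G T : SimpleGraph V)
    (h2conn : G.Connected ∧ ∀ v : V, (G.induce {u | u ≠ v}).Connected)
    (hT : IsLCST G T) (x y : V) (hxy : x ≠ y)
    (hsep : ¬ (G.induce (({x, y} : Set V)ᶜ)).Preconnected)
    (C : (G.induce (({x, y} : Set V)ᶜ)).ConnectedComponent)
    (hjoin : ∃ w : (({x, y} : Set V)ᶜ : Set V),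
      (G.induce (({x, y} : Set V)ᶜ)).connectedComponentMk w = C ∧ T.Adj x ↑w) :
    T.Adj x y ∧
      ∃ w : (({x, y} : Set V)ᶜ : Set V),
        (G.induce (({x, y} : Set V)ᶜ)).connectedComponentMk w = C ∧
          G.Adj x ↑w ∧ G.Adj y ↑w := by
  obtain ⟨hTG, hTconn, _hTacyc, hloc⟩ := hT
  obtain ⟨w, hwC, hwx⟩ := hjoin
  have hxS : x ∉ (({x, y} : Set V)ᶜ) := by simp
  have hyS : y ∉ (({x, y} : Set V)ᶜ) := by simp
  have hmem : ∀ v : V, v ≠ x → v ≠ y → v ∈ (({x, y} : Set V)ᶜ) := by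
    intro v h1 h2; simp [h1, h2]
  -- edges inside (({x, y} : Set V)ᶜ) preserve the component
  have hedge : ∀ (a b : V) (ha : a ∈ (({x, y} : Set V)ᶜ)) (hb : b ∈ (({x, y} : Set V)ᶜ)), G.Adj a b →
      (G.induce (({x, y} : Set V)ᶜ)).connectedComponentMk ⟨a, ha⟩ = (G.induce (({x, y} : Set V)ᶜ)).connectedComponentMk ⟨b, hb⟩ := by
    intro a b ha hb hab
    exact SimpleGraph.ConnectedComponent.sound
      (SimpleGraph.Adj.reachable (by simpa using hab))
  -- local connectivity: two T-neighbors of z lie in the same component when N_T(z) ⊆ (({x, y} : Set V)ᶜ)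
  have hNreach : ∀ (z : V) (hsub : T.neighborSet z ⊆ (({x, y} : Set V)ᶜ)) (u v : V)
      (hu : T.Adj z u) (hv : T.Adj z v),
      (G.induce (({x, y} : Set V)ᶜ)).connectedComponentMk ⟨u, hsub hu⟩ =
        (G.induce (({x, y} : Set V)ᶜ)).connectedComponentMk ⟨v, hsub hv⟩ := by
    intro z hsub u v hu hv
    have hr := (hloc z).preconnected ⟨u, hu⟩ ⟨v, hv⟩
    exact SimpleGraph.ConnectedComponent.sound (reach_induce_mono hsub hr)
  -- a vertex in a component different from C exists
  have hv0 : ∃ v0 : ↥(({x, y} : Set V)ᶜ), (G.induce (({x, y} : Set V)ᶜ)).connectedComponentMk v0 ≠ C := by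
    by_contra hall
    push_neg at hall
    apply hsep
    intro a b
    exact SimpleGraph.ConnectedComponent.exact ((hall a).trans (hall b).symm)
  obtain ⟨v0, hv0⟩ := hv0
  -- Main claim 1 : T.Adj x y
  have hadjxy : T.Adj x y := by
    by_contra hn
    have hNxS : T.neighborSet x ⊆ (({x, y} : Set V)ᶜ) := by
      intro u hu
      exact hmem u (SimpleGraph.Adj.ne' hu) (fun h => hn (h ▸ hu))
    have hNx : ∀ (u : V) (hu : T.Adj x u),
        (G.induce (({x, y} : Set V)ᶜ)).connectedComponentMk ⟨u, hNxS hu⟩ = C := by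
      intro u hu
      exact (hNreach x hNxS u ↑w hu hwx).trans hwC
    have hNyS : T.neighborSet y ⊆ (({x, y} : Set V)ᶜ) := by
      intro u hu
      refine hmem u (fun h => hn ?_) (SimpleGraph.Adj.ne' hu)
      exact (h ▸ hu).symm
    -- y has a T-neighbor in component C
    have hB : ∀ (a b : V) (p : T.Walk a b), y = b →
        (a = x ∨ ∃ h : a ∈ (({x, y} : Set V)ᶜ), (G.induce (({x, y} : Set V)ᶜ)).connectedComponentMk ⟨a, h⟩ = C) →
        ∃ (q : V) (hq : q ∈ (({x, y} : Set V)ᶜ)), T.Adj y q ∧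
          (G.induce (({x, y} : Set V)ᶜ)).connectedComponentMk ⟨q, hq⟩ = C := by
      intro a b p
      induction p with
      | nil =>
          rintro rfl (rfl | ⟨h, -⟩)
          · exact absurd rfl hxy
          · exact absurd h hyS
      | @cons a c b h p ih =>
          rintro rfl ha
          by_cases hcy : c = y
          · subst hcy
            rcases ha with rfl | ⟨haS, haC⟩
            · exact absurd h hn
            · exact ⟨a, haS, h.symm, haC⟩
          · by_cases hcx : c = x
            · exact ih rfl (Or.inl hcx)
            · rcases ha with rfl | ⟨haS, haC⟩
              · exact ih rfl (Or.inr ⟨hNxS h, hNx c h⟩)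
              · have hcS : c ∈ (({x, y} : Set V)ᶜ) := hmem c hcx hcy
                have : (G.induce (({x, y} : Set V)ᶜ)).connectedComponentMk ⟨c, hcS⟩ = C :=
                  (hedge a c haS hcS (hTG h)).symm.trans haC
                exact ih rfl (Or.inr ⟨hcS, this⟩)
    -- y has a T-neighbor in a component different from C
    have hC' : ∀ (a b : V) (p : T.Walk a b), x = b →
        (∃ h : a ∈ (({x, y} : Set V)ᶜ), (G.induce (({x, y} : Set V)ᶜ)).connectedComponentMk ⟨a, h⟩ ≠ C) →
        ∃ (q : V) (hq : q ∈ (({x, y} : Set V)ᶜ)), T.Adj y q ∧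
          (G.induce (({x, y} : Set V)ᶜ)).connectedComponentMk ⟨q, hq⟩ ≠ C := by
      intro a b p
      induction p with
      | nil =>
          rintro rfl ⟨h, -⟩
          exact absurd h hxS
      | @cons a c b h p ih =>
          rintro rfl ⟨haS, haC⟩
          by_cases hcy : c = y
          · subst hcy
            exact ⟨a, haS, h.symm, haC⟩
          · by_cases hcx : c = x
            · subst hcx
              exact absurd (hNx a h.symm) haC
            · have hcS : c ∈ (({x, y} : Set V)ᶜ) := hmem c hcx hcy
              have : (G.induce (({x, y} : Set V)ᶜ)).connectedComponentMk ⟨c, hcS⟩ ≠ C := by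
                rw [← hedge a c haS hcS (hTG h)]
                exact haC
              exact ih rfl ⟨hcS, this⟩
    obtain ⟨pxy⟩ := hTconn.preconnected x y
    obtain ⟨q, hqS, hqy, hqC⟩ := hB x y pxy rfl (Or.inl rfl)
    obtain ⟨pv0⟩ := hTconn.preconnected ↑v0 x
    obtain ⟨q2, hq2S, hq2y, hq2C⟩ := hC' ↑v0 x pv0 rfl ⟨v0.2, hv0⟩
    exact hq2C ((hNreach y hNyS q2 q hq2y hqy).trans hqC)
  refine ⟨hadjxy, ?_⟩
  -- Common neighbor: walk in the induced graph on N_T(x) from w to y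
  have hyNx : y ∈ T.neighborSet x := hadjxy
  have hwNx : ↑w ∈ T.neighborSet x := hwx
  have hF : ∀ (a b : ↥(T.neighborSet x)) (p : (G.induce (T.neighborSet x)).Walk a b),
      y = ↑b →
      (∃ h : ↑a ∈ (({x, y} : Set V)ᶜ), (G.induce (({x, y} : Set V)ᶜ)).connectedComponentMk ⟨↑a, h⟩ = C) →
      ∃ w' : ↥(({x, y} : Set V)ᶜ), (G.induce (({x, y} : Set V)ᶜ)).connectedComponentMk w' = C ∧ G.Adj x ↑w' ∧ G.Adj y ↑w' := by
    intro a b p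
    induction p with
    | nil =>
        rintro hb ⟨h, -⟩
        exact absurd (hb ▸ h) hyS
    | @cons a c b h p ih =>
        rintro hb ⟨haS, haC⟩
        have hGac : G.Adj ↑a ↑c := by simpa using h
        by_cases hcy : (↑c : V) = y
        · refine ⟨⟨↑a, haS⟩, haC, hTG a.2, ?_⟩
          exact (hcy ▸ hGac).symm
        · have hcx : (↑c : V) ≠ x := SimpleGraph.Adj.ne' (c.2 : T.Adj x ↑c)
          have hcS : (↑c : V) ∈ (({x, y} : Set V)ᶜ) := hmem ↑c hcx hcy
          have : (G.induce (({x, y} : Set V)ᶜ)).connectedComponentMk ⟨↑c, hcS⟩ = C :=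
            (hedge ↑a ↑c haS hcS hGac).symm.trans haC
          exact ih hb ⟨hcS, this⟩
  obtain ⟨p⟩ := (hloc x).preconnected ⟨↑w, hwNx⟩ ⟨y, hyNx⟩
  exact hF ⟨↑w, hwNx⟩ ⟨y, hyNx⟩ p rfl ⟨w.2, hwC⟩
end
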